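/- arXiv:1802.02426 — 8 statements merged into one kernel-verified Lean document; each statement's English description precedes it below -/
import Mathlib

section
/- Suppose the equation aᵀx = d is implied by the system Bx = b in the sense that a = Bᵀα ∈ ℝ^m and d = bᵀα ∈ ℝ for some α ∈ ℝ^n. Then for any Y ∈ ℝ^{n×m} and y ∈ ℝ^m, the matrix Q = BᵀY + a yᵀ ∈ ℝ^{m×m} is linearizable with linearization vector c = Yᵀb + d·y ∈ ℝ^m; that is, xᵀ(BᵀY + a yᵀ)x = (Yᵀb + d·y)ᵀx for every x ∈ K. -/
open Matrix

lemma vecMulVec_mulVec' {m : ℕ} (w v x : Fin m → ℝ) :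
    (vecMulVec w v) *ᵥ x = (v ⬝ᵥ x) • w := by
  ext i
  simp [vecMulVec_apply, mulVec, dotProduct, Finset.mul_sum, mul_comm, mul_left_comm]

/-- If `aᵀx = d` is implied by `Bx = b` in the sense that `a = Bᵀα`
and `d = bᵀα` for some `α ∈ ℝ^n`, then for any `Y ∈ ℝ^{n×m}` and `y ∈ ℝ^m`, the matrix
`Q = BᵀY + ayᵀ` is linearizable with linearization vector `c = Yᵀb + d·y`. -/
theorem stmt1 {n m : ℕ} (B : Matrix (Fin n) (Fin m) ℝ) (b : Fin n → ℝ)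
    (a : Fin m → ℝ) (d : ℝ) (α : Fin n → ℝ)
    (ha : a = Bᵀ.mulVec α) (hd : d = b ⬝ᵥ α)
    (Y : Matrix (Fin n) (Fin m) ℝ) (y : Fin m → ℝ) :
    ∀ x : Fin m → ℝ, B.mulVec x = b → (∀ i, x i = 0 ∨ x i = 1) →
      x ⬝ᵥ (Bᵀ * Y + Matrix.vecMulVec a y).mulVec x = (Yᵀ.mulVec b + d • y) ⬝ᵥ x := by
  intro x hx _
  subst ha hd
  have h2 : x ⬝ᵥ Bᵀ *ᵥ α = b ⬝ᵥ α := by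
    rw [dotProduct_mulVec, vecMul_transpose, hx]
  have h1 : x ⬝ᵥ (Bᵀ * Y) *ᵥ x = Yᵀ *ᵥ b ⬝ᵥ x := by
    rw [← mulVec_mulVec, dotProduct_mulVec, vecMul_transpose, hx,
      mulVec_transpose, dotProduct_mulVec]
  rw [add_mulVec, dotProduct_add, add_dotProduct, vecMulVec_mulVec',
    dotProduct_smul, h1, h2, smul_dotProduct, smul_eq_mul, smul_eq_mul,
    mul_comm]
end

section
/- Assume Q ∈ ℝ^{m×m} is symmetric. Then the supremum of bᵀy over all (Y, S, z, y) with Y ∈ ℝ^{n×m}, S ∈ ℝ^{m×m} skew-symmetric, z ∈ ℝ^m, y ∈ ℝ^n satisfying Bᵀy ≤ Yᵀb + z and BᵀY + S + Diag(z) ≤ Q (entrywise) equals the supremum of bᵀy over all (Y, z, y) satisfying Bᵀy ≤ 2Yᵀb + z and BᵀY + YᵀB + Diag(z) ≤ Q (entrywise). -/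
open Matrix

/-- Assume `Q` is symmetric. Then the supremum of `bᵀy` over all
`(Y, S, z, y)` with `S` skew-symmetric satisfying `Bᵀy ≤ Yᵀb + z` and
`BᵀY + S + Diag(z) ≤ Q` entrywise equals the supremum of `bᵀy` over all `(Y, z, y)`
satisfying `Bᵀy ≤ 2Yᵀb + z` and `BᵀY + YᵀB + Diag(z) ≤ Q` entrywise. -/
theorem stmt5 {n m : ℕ} (B : Matrix (Fin n) (Fin m) ℝ) (b : Fin n → ℝ)
    (Q : Matrix (Fin m) (Fin m) ℝ) (hQ : Qᵀ = Q) :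
    sSup {t : EReal | ∃ (Y : Matrix (Fin n) (Fin m) ℝ) (S : Matrix (Fin m) (Fin m) ℝ)
        (z : Fin m → ℝ) (y : Fin n → ℝ),
        S + Sᵀ = 0 ∧
        Bᵀ.mulVec y ≤ Yᵀ.mulVec b + z ∧
        (∀ i j, (Bᵀ * Y + S + Matrix.diagonal z) i j ≤ Q i j) ∧
        t = ((b ⬝ᵥ y : ℝ) : EReal)} =
    sSup {t : EReal | ∃ (Y : Matrix (Fin n) (Fin m) ℝ) (z : Fin m → ℝ) (y : Fin n → ℝ),
        Bᵀ.mulVec y ≤ (2 : ℝ) • Yᵀ.mulVec b + z ∧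
        (∀ i j, (Bᵀ * Y + Yᵀ * B + Matrix.diagonal z) i j ≤ Q i j) ∧
        t = ((b ⬝ᵥ y : ℝ) : EReal)} := by
  congr 1
  ext t
  constructor
  · rintro ⟨Y, S, z, y, hS, h1, h2, ht⟩
    refine ⟨(1/2 : ℝ) • Y, z, y, ?_, ?_, ht⟩
    · have hv : (2 : ℝ) • ((((1/2 : ℝ) • Y)ᵀ).mulVec b) = Yᵀ.mulVec b := by
        ext i
        simp [Matrix.transpose_smul, Matrix.smul_mulVec]
      rw [hv]; exact h1
    · intro i j
      have hA := h2 i j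
      have hB := h2 j i
      have hSij : S j i + S i j = 0 := by
        have := congrFun (congrFun hS j) i
        simpa [Matrix.add_apply, Matrix.transpose_apply] using this
      have hYB : (Yᵀ * B) i j = (Bᵀ * Y) j i := by
        have : Yᵀ * B = (Bᵀ * Y)ᵀ := by simp [Matrix.transpose_mul]
        rw [this]; rfl
      have hQij : Q j i = Q i j := congrFun (congrFun hQ i) j
      have hdiag : Matrix.diagonal z j i = Matrix.diagonal z i j := by
        by_cases h : i = j
        · subst h; rfl
        · rw [Matrix.diagonal_apply_ne' z h, Matrix.diagonal_apply_ne z h]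
      simp only [Matrix.add_apply, Matrix.smul_apply, Matrix.mul_smul, smul_eq_mul] at *
      rw [Matrix.transpose_smul, Matrix.smul_mul, Matrix.smul_apply, smul_eq_mul, hYB]
      linarith
  · rintro ⟨Y, z, y, h1, h2, ht⟩
    refine ⟨(2 : ℝ) • Y, Yᵀ * B - Bᵀ * Y, z, y, ?_, ?_, ?_, ht⟩
    · have : (Yᵀ * B - Bᵀ * Y)ᵀ = Bᵀ * Y - Yᵀ * B := by
        simp [Matrix.transpose_sub, Matrix.transpose_mul]
      rw [this]; abel
    · have hv : (((2 : ℝ) • Y)ᵀ).mulVec b = (2 : ℝ) • (Yᵀ.mulVec b) := by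
        ext i
        simp [Matrix.transpose_smul, Matrix.smul_mulVec]
      rw [hv]; exact h1
    · intro i j
      have hA := h2 i j
      simp only [Matrix.add_apply, Matrix.sub_apply, Matrix.mul_smul, Matrix.smul_apply,
        smul_eq_mul] at *
      linarith
end

section
/- (v_GGL ≤ v_LBB') Let k ≥ 1, let Ȳ⁰,…,Ȳ^{k−1} ∈ ℝ^{n×m}, z̄⁰,…,z̄^{k−1} ∈ ℝ^m, and let S₀ = 0 and S₁,…,S_{k−1} ∈ ℝ^{m×m} be skew-symmetric. Define Q̄_i = BᵀȲ^i + Diag(z̄^i), Q₀ = Q, and Q_{i+1} = Q_i + S_i − Q̄_i for i = 0,…,k−1, and suppose Q_k ≥ 0 entrywise (feasibility of the Generalized Gilmore–Lawler dual updates). Let c = Σ_{i=0}^{k−1}(Ȳ^{i,ᵀ}b + z̄^i). Then sup{ bᵀy : y ∈ ℝ^n, Bᵀy ≤ c } ≤ sup{ bᵀy : Y ∈ ℝ^{n×m}, z ∈ ℝ^m, y ∈ ℝ^n, Bᵀy ≤ 2Yᵀb + z, BᵀY + YᵀB + Diag(z) ≤ (Q + Qᵀ)/2 }; i.e., the Generalized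 Gilmore–Lawler bound is at most the linearization-based bound v_LBB'. -/
open Matrix

/-- **v_GGL ≤ v_LBB'.** Let `k ≥ 1`, let `Ȳ⁰,…,Ȳ^{k−1}`, `z̄⁰,…,z̄^{k−1}`,
`S₀ = 0` and skew-symmetric `S₁,…,S_{k−1}` be the data of the Generalized Gilmore–Lawler
dual updates: `Q₀ = Q`, `Q_{i+1} = Q_i + S_i − (BᵀȲⁱ + Diag(z̄ⁱ))`, with `Q_k ≥ 0`
entrywise, and let `c = Σ_i (Ȳ^{i,ᵀ}b + z̄ⁱ)`. Then the GGL bound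
`sup{bᵀy : Bᵀy ≤ c}` is at most the linearization-based bound `v_LBB'`
`sup{bᵀy : Bᵀy ≤ 2Yᵀb + z, BᵀY + YᵀB + Diag(z) ≤ (Q+Qᵀ)/2}`. -/
theorem stmt6 {n m : ℕ} (B : Matrix (Fin n) (Fin m) ℝ) (b : Fin n → ℝ)
    (Q : Matrix (Fin m) (Fin m) ℝ) (k : ℕ) (hk : 1 ≤ k)
    (Ybar : ℕ → Matrix (Fin n) (Fin m) ℝ) (zbar : ℕ → Fin m → ℝ)
    (S : ℕ → Matrix (Fin m) (Fin m) ℝ)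
    (hS0 : S 0 = 0)
    (hSskew : ∀ i, i < k → S i + (S i)ᵀ = 0)
    (Qseq : ℕ → Matrix (Fin m) (Fin m) ℝ)
    (hQ0 : Qseq 0 = Q)
    (hQstep : ∀ i, i < k →
      Qseq (i + 1) = Qseq i + S i - (Bᵀ * Ybar i + Matrix.diagonal (zbar i)))
    (hfeas : ∀ a b', 0 ≤ Qseq k a b')
    (c : Fin m → ℝ)
    (hc : c = ∑ i ∈ Finset.range k, ((Ybar i)ᵀ.mulVec b + zbar i)) :
    sSup {t : EReal | ∃ y : Fin n → ℝ,
        Bᵀ.mulVec y ≤ c ∧ t = ((b ⬝ᵥ y : ℝ) : EReal)} ≤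
    sSup {t : EReal | ∃ (Y : Matrix (Fin n) (Fin m) ℝ) (z : Fin m → ℝ) (y : Fin n → ℝ),
        Bᵀ.mulVec y ≤ (2 : ℝ) • Yᵀ.mulVec b + z ∧
        (∀ i j, (Bᵀ * Y + Yᵀ * B + Matrix.diagonal z) i j ≤ (Q i j + Q j i) / 2) ∧
        t = ((b ⬝ᵥ y : ℝ) : EReal)} := by
  apply sSup_le_sSup
  rintro t ⟨y, hy, ht⟩
  set M := ∑ i ∈ Finset.range k, Ybar i with hM
  set z := ∑ i ∈ Finset.range k, zbar i with hz
  have key : ∀ j, j ≤ k → Qseq j =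
      Q + ∑ i ∈ Finset.range j, (S i - (Bᵀ * Ybar i + Matrix.diagonal (zbar i))) := by
    intro j
    induction j with
    | zero => intro _; simp [hQ0]
    | succ j ih =>
      intro hj
      rw [hQstep j (by omega), ih (by omega), Finset.sum_range_succ]
      abel
  have hQk := key k le_rfl
  refine ⟨(1/2 : ℝ) • M, z, y, ?_, ?_, ht⟩
  · have hceq : c = (2 : ℝ) • ((1/2 : ℝ) • M)ᵀ.mulVec b + z := by
      funext j
      simp only [hc, hM, hz, Matrix.mulVec, dotProduct, Finset.sum_apply,
        Matrix.transpose_apply, Matrix.sum_apply, Finset.sum_add_distrib,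
        Pi.add_apply, Pi.smul_apply, smul_eq_mul, Matrix.transpose_smul,
        Matrix.smul_apply]
      congr 1
      rw [Finset.mul_sum, Finset.sum_comm]
      refine Finset.sum_congr rfl fun x _ => ?_
      rw [← Finset.sum_mul]
      ring
    rw [← hceq]; exact hy
  · intro i j
    have h1 := hfeas i j
    have h2 := hfeas j i
    rw [hQk] at h1 h2
    have hskew : ∑ l ∈ Finset.range k, (S l i j + S l j i) = 0 := by
      refine Finset.sum_eq_zero fun l hl => ?_
      have h := hSskew l (Finset.mem_range.mp hl)
      have := congrFun (congrFun h i) j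
      simpa [Matrix.add_apply, Matrix.transpose_apply] using this
    have hBM : (Bᵀ * M) = ∑ l ∈ Finset.range k, Bᵀ * Ybar l := by
      rw [hM, Matrix.mul_sum]
    have hdiag : (Matrix.diagonal z : Matrix (Fin m) (Fin m) ℝ)
        = ∑ l ∈ Finset.range k, Matrix.diagonal (zbar l) := by
      funext a b'
      simp only [Matrix.diagonal_apply, Matrix.sum_apply, hz, Finset.sum_apply]
      by_cases h : a = b' <;> simp [h]
    have hMB : (((1/2 : ℝ) • M)ᵀ * B) i j = (1/2 : ℝ) * (Bᵀ * M) j i := by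
      have : (Mᵀ * B) = (Bᵀ * M)ᵀ := by rw [Matrix.transpose_mul, Matrix.transpose_transpose]
      rw [Matrix.transpose_smul, Matrix.smul_mul, Matrix.smul_apply, this,
        Matrix.transpose_apply, smul_eq_mul]
    have hBMs : (Bᵀ * ((1/2 : ℝ) • M)) i j = (1/2 : ℝ) * (Bᵀ * M) i j := by
      simp [Matrix.mul_smul]
    simp only [Matrix.add_apply, hBMs, hMB]
    have e1 : (∑ l ∈ Finset.range k, (S l - (Bᵀ * Ybar l + Matrix.diagonal (zbar l)))) i j
        = (∑ l ∈ Finset.range k, S l i j) - ((Bᵀ * M) i j + Matrix.diagonal z i j) := by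
      simp [Matrix.sum_apply, Matrix.sub_apply, Matrix.add_apply, hBM, hdiag,
        Finset.sum_sub_distrib, Finset.sum_add_distrib]
    have e2 : (∑ l ∈ Finset.range k, (S l - (Bᵀ * Ybar l + Matrix.diagonal (zbar l)))) j i
        = (∑ l ∈ Finset.range k, S l j i) - ((Bᵀ * M) j i + Matrix.diagonal z j i) := by
      simp [Matrix.sum_apply, Matrix.sub_apply, Matrix.add_apply, hBM, hdiag,
        Finset.sum_sub_distrib, Finset.sum_add_distrib]
    simp only [Matrix.add_apply, e1, e2] at h1 h2
    have hdsym : (Matrix.diagonal z : Matrix (Fin m) (Fin m) ℝ) i j = Matrix.diagonal z j i := by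
      rcases eq_or_ne i j with h | h
      · rw [h]
      · rw [Matrix.diagonal_apply_ne _ h, Matrix.diagonal_apply_ne _ (Ne.symm h)]
    rw [Finset.sum_add_distrib] at hskew
    linarith
end

section
/- (v_LBB' = v_RLT1) Assume Q ∈ ℝ^{m×m} is symmetric and K = {x ∈ {0,1}^m : Bx = b} is nonempty. Then, as extended reals, sup{ bᵀy : Y ∈ ℝ^{n×m}, z ∈ ℝ^m, y ∈ ℝ^n, Bᵀy ≤ 2Yᵀb + z, BᵀY + YᵀB + Diag(z) ≤ Q } = inf{ ⟨Q, X⟩ : x ∈ ℝ^m, X ∈ ℝ^{m×m} symmetric, Bx = b, x ≥ 0, BX = b xᵀ, X ≥ 0, x = diag(X) }; i.e., the linearization-based bound v_LBB' equals the first-level RLT (reformulation-linearization technique) bound v_RLT1. -/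
open Matrix

set_option linter.unusedSectionVars false
set_option maxHeartbeats 1000000

section Aux
open Finset

variable {E : Type*} [AddCommGroup E] [Module ℝ E]

/-- Conic Carathéodory: a nonnegative combination can be rewritten using a
linearly independent subfamily. -/
lemma cone_carath {ι : Type*} [DecidableEq ι] (v : ι → E) (s : Finset ι) :
    ∀ lam : ι → ℝ, (∀ i ∈ s, 0 ≤ lam i) →
    ∃ t ⊆ s, LinearIndependent ℝ (fun i : ↥t => v i) ∧
      ∃ mu : ι → ℝ, (∀ i ∈ t, 0 ≤ mu i) ∧
        ∑ i ∈ t, mu i • v i = ∑ i ∈ s, lam i • v i := by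
  induction s using Finset.strongInduction with
  | _ s ih =>
    intro lam hlam
    by_cases hli : LinearIndependent ℝ (fun i : ↥s => v i)
    · exact ⟨s, le_refl s, hli, lam, hlam, rfl⟩
    · rw [Fintype.not_linearIndependent_iff] at hli
      obtain ⟨g₀, hg0, i₀, hi₀⟩ := hli
      set g : ι → ℝ := fun i => if h : i ∈ s then g₀ ⟨i, h⟩ else 0 with hgdef
      have hgsum : ∑ i ∈ s, g i • v i = 0 := by
        rw [← Finset.sum_coe_sort s]
        simpa [hgdef] using hg0
      have hgne : ∃ j ∈ s, g j ≠ 0 := ⟨i₀, i₀.2, by simpa [hgdef] using hi₀⟩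
      -- key step for a coefficient vector with a positive entry on s
      have key : ∀ g : ι → ℝ, (∑ i ∈ s, g i • v i = 0) → (∃ j ∈ s, 0 < g j) →
          ∃ t ⊆ s, LinearIndependent ℝ (fun i : ↥t => v i) ∧
            ∃ mu : ι → ℝ, (∀ i ∈ t, 0 ≤ mu i) ∧
              ∑ i ∈ t, mu i • v i = ∑ i ∈ s, lam i • v i := by
        intro g hsum ⟨j, hj, hjpos⟩
        have hTne : (s.filter (fun i => 0 < g i)).Nonempty :=
          ⟨j, Finset.mem_filter.2 ⟨hj, hjpos⟩⟩
        obtain ⟨i₁, hi₁, hri₁⟩ := Finset.exists_mem_eq_inf' hTne (fun i => lam i / g i)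
        set r : ℝ := (s.filter (fun i => 0 < g i)).inf' hTne (fun i => lam i / g i) with hrdef
        have hi₁s : i₁ ∈ s := (Finset.mem_filter.1 hi₁).1
        have hi₁pos : 0 < g i₁ := (Finset.mem_filter.1 hi₁).2
        have hr0 : 0 ≤ r := by
          rw [hri₁]; exact div_nonneg (hlam i₁ hi₁s) hi₁pos.le
        set lam' : ι → ℝ := fun i => lam i - r * g i with hl'def
        have hlam' : ∀ i ∈ s, 0 ≤ lam' i := by
          intro i hi
          by_cases hgi : 0 < g i
          · have : r ≤ lam i / g i :=
              Finset.inf'_le _ (Finset.mem_filter.2 ⟨hi, hgi⟩)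
            have := (le_div_iff₀ hgi).1 this
            simp only [hl'def]; linarith
          · have : r * g i ≤ 0 := mul_nonpos_of_nonneg_of_nonpos hr0 (not_lt.1 hgi)
            have := hlam i hi
            simp only [hl'def]; linarith
        have hlam'i₁ : lam' i₁ = 0 := by
          simp only [hl'def, hri₁]
          field_simp
          ring
        have hsum' : ∑ i ∈ s, lam' i • v i = ∑ i ∈ s, lam i • v i := by
          simp only [hl'def, sub_smul, Finset.sum_sub_distrib, mul_smul]
          rw [← Finset.smul_sum, hsum, smul_zero, sub_zero]
        have herase : ∑ i ∈ s.erase i₁, lam' i • v i = ∑ i ∈ s, lam i • v i := by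
          rw [← hsum', ← Finset.add_sum_erase s _ hi₁s, hlam'i₁, zero_smul, zero_add]
        obtain ⟨t, hts, hli, mu, hmu, hmusum⟩ :=
          ih (s.erase i₁) (Finset.erase_ssubset hi₁s) lam'
            (fun i hi => hlam' i (Finset.mem_of_mem_erase hi))
        exact ⟨t, hts.trans (Finset.erase_subset _ _), hli, mu, hmu,
          hmusum.trans herase⟩
      obtain ⟨j, hj, hjne⟩ := hgne
      rcases lt_or_gt_of_ne hjne with hneg | hpos
      · refine key (-g) ?_ ⟨j, hj, by simpa using hneg⟩
        simp only [Pi.neg_apply, neg_smul, Finset.sum_neg_distrib, hgsum, neg_zero]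
      · exact key g hgsum ⟨j, hj, hpos⟩

/-- Finitely generated convex cones in `κ → ℝ` are closed. -/
lemma cone_isClosed {ι κ : Type*} [Fintype ι] [DecidableEq ι] [Fintype κ]
    (v : ι → (κ → ℝ)) :
    IsClosed {w : κ → ℝ | ∃ x : ι → ℝ, (∀ i, 0 ≤ x i) ∧ w = ∑ i, x i • v i} := by
  have hset : {w : κ → ℝ | ∃ x : ι → ℝ, (∀ i, 0 ≤ x i) ∧ w = ∑ i, x i • v i} =
      ⋃ (t : Finset ι) (_ : LinearIndependent ℝ (fun i : ↥t => v i)),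
        (fun μ : ↥t → ℝ => ∑ i, μ i • v i) '' {μ | ∀ i, 0 ≤ μ i} := by
    ext w
    simp only [Set.mem_setOf_eq, Set.mem_iUnion, Set.mem_image]
    constructor
    · rintro ⟨x, hx, rfl⟩
      obtain ⟨t, _, hli, mu, hmu, hsum⟩ :=
        cone_carath v Finset.univ x (fun i _ => hx i)
      refine ⟨t, hli, fun i => mu i, fun i => hmu i i.2, ?_⟩
      rw [Finset.sum_coe_sort t (fun i => mu i • v i), hsum]
    · rintro ⟨t, hli, μ, hμ, rfl⟩
      classical
      refine ⟨fun i => if h : i ∈ t then μ ⟨i, h⟩ else 0,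
        fun i => by by_cases h : i ∈ t <;> simp [h, hμ] , ?_⟩
      have h1 : ∑ i : ι, (if h : i ∈ t then μ ⟨i, h⟩ else 0) • v i
          = ∑ i ∈ t, (if h : i ∈ t then μ ⟨i, h⟩ else 0) • v i :=
        (Finset.sum_subset (Finset.subset_univ t) (fun i _ hit => by simp [hit])).symm
      rw [h1, ← Finset.sum_attach t (fun i => (if h : i ∈ t then μ ⟨i, h⟩ else 0) • v i)]
      exact (Finset.sum_congr rfl (fun i _ => by simp [i.2])).symm
  rw [hset]
  refine isClosed_iUnion_of_finite fun t => isClosed_iUnion_of_finite fun hli => ?_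
  have horth : IsClosed {μ : ↥t → ℝ | ∀ i, 0 ≤ μ i} := by
    have : {μ : ↥t → ℝ | ∀ i, 0 ≤ μ i} = ⋂ i, {μ | 0 ≤ μ i} := by ext; simp
    rw [this]
    exact isClosed_iInter fun i => isClosed_le continuous_const (continuous_apply i)
  let L : (↥t → ℝ) →ₗ[ℝ] (κ → ℝ) :=
    { toFun := fun μ => ∑ i, μ i • v i
      map_add' := by intro a b; simp [add_smul, Finset.sum_add_distrib]
      map_smul' := by intro c a; simp [smul_smul, Finset.smul_sum]
    }
  have hinj : LinearMap.ker L = ⊥ := by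
    rw [LinearMap.ker_eq_bot']
    intro μ hμ
    rw [Fintype.linearIndependent_iff] at hli
    exact funext (hli μ hμ)
  exact (LinearMap.isClosedEmbedding_of_injective hinj).isClosedMap _ horth


lemma mulVec_eq_sum_cols {ι κ : Type*} [Fintype ι] (A : Matrix κ ι ℝ) (x : ι → ℝ) :
    A.mulVec x = ∑ i, x i • (fun k => A k i) := by
  funext k
  simp [Matrix.mulVec, dotProduct, Finset.sum_apply, mul_comm]

/-- Farkas' lemma (infeasibility direction). -/
lemma farkas_not {ι κ : Type*} [Fintype ι] [Fintype κ] [DecidableEq ι] [DecidableEq κ]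
    (A : Matrix κ ι ℝ) (b : κ → ℝ)
    (h : ¬ ∃ x : ι → ℝ, (∀ i, 0 ≤ x i) ∧ A.mulVec x = b) :
    ∃ y : κ → ℝ, (∀ i, 0 ≤ Aᵀ.mulVec y i) ∧ b ⬝ᵥ y < 0 := by
  classical
  set C := {w : κ → ℝ | ∃ x : ι → ℝ, (∀ i, 0 ≤ x i) ∧ w = ∑ i, x i • (fun k => A k i)}
    with hCdef
  have hCclosed : IsClosed C := cone_isClosed _
  have hCconvex : Convex ℝ C := by
    rintro w ⟨x, hx, rfl⟩ w' ⟨x', hx', rfl⟩ a c ha hc _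
    refine ⟨fun i => a * x i + c * x' i,
      fun i => add_nonneg (mul_nonneg ha (hx i)) (mul_nonneg hc (hx' i)), ?_⟩
    simp only [Finset.smul_sum, smul_smul, add_smul, Finset.sum_add_distrib]
  have hCcone : ∀ w ∈ C, ∀ t : ℝ, 0 ≤ t → t • w ∈ C := by
    rintro w ⟨x, hx, rfl⟩ t ht
    exact ⟨fun i => t * x i, fun i => mul_nonneg ht (hx i),
      by simp only [Finset.smul_sum, smul_smul]⟩
  have hbC : b ∉ C := by
    rintro ⟨x, hx, rfl⟩
    exact h ⟨x, hx, mulVec_eq_sum_cols A x⟩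
  obtain ⟨f, u, hfb, hfC⟩ := geometric_hahn_banach_point_closed hCconvex hCclosed hbC
  have h0C : (0 : κ → ℝ) ∈ C := ⟨0, fun i => le_refl 0, by simp⟩
  have hu0 : u < 0 := by simpa using hfC 0 h0C
  have hfpos : ∀ w ∈ C, 0 ≤ f w := by
    intro w hw
    by_contra hneg
    push_neg at hneg
    have ht : 0 < (u - 1) / f w := div_pos_of_neg_of_neg (by linarith) hneg
    have := hfC (((u - 1) / f w) • w) (hCcone w hw _ ht.le)
    rw [f.map_smul, smul_eq_mul, div_mul_cancel₀ _ (ne_of_lt hneg)] at this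
    linarith
  set y : κ → ℝ := fun k => f (fun j => if k = j then (1 : ℝ) else 0) with hydef
  have hf_eq : ∀ v : κ → ℝ, f v = ∑ k, v k * y k := by
    intro v
    conv_lhs => rw [pi_eq_sum_univ v]
    rw [map_sum]
    exact Finset.sum_congr rfl fun k _ => by rw [f.map_smul, smul_eq_mul]
  refine ⟨y, ?_, ?_⟩
  · intro i
    have hcol : (fun k => A k i) ∈ C := by
      refine ⟨fun j => if j = i then 1 else 0, fun j => by positivity, ?_⟩
      funext k
      rw [Finset.sum_apply]
      simp [ite_smul]
    have := hfpos _ hcol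
    rw [hf_eq] at this
    simpa [Matrix.mulVec, dotProduct, Matrix.transpose_apply] using this
  · have := hfb.trans hu0
    rw [hf_eq] at this
    simpa [dotProduct] using this

/-- Farkas' lemma, inequality form. -/
lemma farkas_ineq {ι κ : Type*} [Fintype ι] [Fintype κ] [DecidableEq ι] [DecidableEq κ]
    (A : Matrix κ ι ℝ) (b : κ → ℝ)
    (h : ¬ ∃ x : ι → ℝ, (∀ i, 0 ≤ x i) ∧ ∀ k, A.mulVec x k ≤ b k) :
    ∃ y : κ → ℝ, (∀ k, 0 ≤ y k) ∧ (∀ i, 0 ≤ Aᵀ.mulVec y i) ∧ b ⬝ᵥ y < 0 := by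
  classical
  have h' : ¬ ∃ z : ι ⊕ κ → ℝ, (∀ i, 0 ≤ z i) ∧
      (Matrix.fromCols A (1 : Matrix κ κ ℝ)).mulVec z = b := by
    rintro ⟨z, hz, hzeq⟩
    refine h ⟨fun i => z (Sum.inl i), fun i => hz _, fun k => ?_⟩
    have hz' : z = Sum.elim (fun i => z (Sum.inl i)) (fun k => z (Sum.inr k)) :=
      funext fun j => by cases j <;> rfl
    rw [hz', Matrix.fromCols_mulVec_sumElim] at hzeq
    have := congrFun hzeq k
    simp only [Matrix.one_mulVec, Pi.add_apply] at this
    have h2 := hz (Sum.inr k)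
    linarith
  obtain ⟨y, hy1, hy2⟩ := farkas_not _ _ h'
  rw [Matrix.transpose_fromCols] at hy1
  refine ⟨y, ?_, ?_, hy2⟩
  · intro k
    have := hy1 (Sum.inr k)
    simpa [Matrix.fromRows_mulVec, Matrix.one_mulVec] using this
  · intro i
    have := hy1 (Sum.inl i)
    simpa [Matrix.fromRows_mulVec] using this

section LP
variable {ι κ : Type*} [Fintype ι] [Fintype κ] [DecidableEq ι] [DecidableEq κ]

/-- Weak duality. -/
lemma lp_weak (A : Matrix κ ι ℝ) (b : κ → ℝ) (c : ι → ℝ)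
    {x : ι → ℝ} {y : κ → ℝ} (hx0 : ∀ i, 0 ≤ x i) (hxA : A.mulVec x = b)
    (hy : ∀ i, Aᵀ.mulVec y i ≤ c i) : b ⬝ᵥ y ≤ c ⬝ᵥ x := by
  calc b ⬝ᵥ y = y ⬝ᵥ (A *ᵥ x) := by rw [hxA, dotProduct_comm]
    _ = (y ᵥ* A) ⬝ᵥ x := dotProduct_mulVec _ _ _
    _ = (Aᵀ *ᵥ y) ⬝ᵥ x := by rw [Matrix.mulVec_transpose]
    _ ≤ c ⬝ᵥ x := Finset.sum_le_sum fun i _ =>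
        mul_le_mul_of_nonneg_right (hy i) (hx0 i)

/-- If the dual is infeasible but primal feasible, the primal is unbounded below. -/
lemma lp_dual_infeasible_ray (A : Matrix κ ι ℝ) (c : ι → ℝ)
    (h : ¬ ∃ y : κ → ℝ, ∀ i, Aᵀ.mulVec y i ≤ c i) :
    ∃ d : ι → ℝ, (∀ i, 0 ≤ d i) ∧ A.mulVec d = 0 ∧ c ⬝ᵥ d < 0 := by
  classical
  set M : Matrix ι (κ ⊕ κ) ℝ :=
    Matrix.of (fun i r => Sum.elim (fun k => A k i) (fun k => -A k i) r) with hM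
  have h' : ¬ ∃ z : κ ⊕ κ → ℝ, (∀ r, 0 ≤ z r) ∧ ∀ i, M.mulVec z i ≤ c i := by
    rintro ⟨z, hz, hzle⟩
    refine h ⟨fun k => z (Sum.inl k) - z (Sum.inr k), fun i => ?_⟩
    have hcomp : M.mulVec z i = Aᵀ.mulVec (fun k => z (Sum.inl k) - z (Sum.inr k)) i := by
      simp [hM, Matrix.mulVec, dotProduct, Fintype.sum_sum_type, mul_sub, sub_mul,
        Finset.sum_sub_distrib, mul_comm, neg_mul]
      ring
    rw [← hcomp]; exact hzle i
  obtain ⟨d, hd0, hdM, hdc⟩ := farkas_ineq M c h'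
  refine ⟨d, hd0, ?_, hdc⟩
  have h1 : ∀ k, 0 ≤ Mᵀ.mulVec d (Sum.inl k) := fun k => hdM _
  have h2 : ∀ k, 0 ≤ Mᵀ.mulVec d (Sum.inr k) := fun k => hdM _
  funext k
  have e1 : Mᵀ.mulVec d (Sum.inl k) = A.mulVec d k := by
    simp [hM, Matrix.mulVec, dotProduct]
  have e2 : Mᵀ.mulVec d (Sum.inr k) = -A.mulVec d k := by
    simp [hM, Matrix.mulVec, dotProduct, neg_mul, Finset.sum_neg_distrib]
  have := h1 k; rw [e1] at this
  have h2' := h2 k; rw [e2] at h2'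
  simp only [Pi.zero_apply]
  linarith
end LP

section LP2
variable {ι κ : Type*} [Fintype ι] [Fintype κ] [DecidableEq ι] [DecidableEq κ]

lemma lp_sublevel (A : Matrix κ ι ℝ) (b : κ → ℝ) (c : ι → ℝ) (γ : ℝ)
    (h : ¬ ∃ x : ι → ℝ, (∀ i, 0 ≤ x i) ∧ A.mulVec x = b ∧ c ⬝ᵥ x ≤ γ) :
    (∃ y, (∀ i, Aᵀ.mulVec y i ≤ c i) ∧ γ < b ⬝ᵥ y) ∨
    (∃ w, (∀ i, Aᵀ.mulVec w i ≤ 0) ∧ 0 < b ⬝ᵥ w) := by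
  classical
  set M : Matrix (κ ⊕ κ ⊕ Unit) ι ℝ :=
    Matrix.of (fun r i =>
      Sum.elim (fun k => A k i) (Sum.elim (fun k => -A k i) (fun _ => c i)) r) with hM
  set d : κ ⊕ κ ⊕ Unit → ℝ := Sum.elim b (Sum.elim (-b) (fun _ => γ)) with hd
  have h' : ¬ ∃ x : ι → ℝ, (∀ i, 0 ≤ x i) ∧ ∀ r, M.mulVec x r ≤ d r := by
    rintro ⟨x, hx0, hxle⟩
    have e1 : ∀ k, A.mulVec x k ≤ b k := by
      intro k
      have := hxle (Sum.inl k)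
      simpa [hM, hd, Matrix.mulVec, dotProduct] using this
    have e2 : ∀ k, b k ≤ A.mulVec x k := by
      intro k
      have := hxle (Sum.inr (Sum.inl k))
      simp only [hM, hd, Matrix.mulVec, dotProduct, Matrix.of_apply, Sum.elim_inl,
        Sum.elim_inr, Pi.neg_apply, neg_mul, Finset.sum_neg_distrib] at this
      have : -(∑ i, A k i * x i) ≤ -b k := by simpa using this
      simpa [Matrix.mulVec, dotProduct] using neg_le_neg_iff.1 this
    have e3 : c ⬝ᵥ x ≤ γ := by
      have := hxle (Sum.inr (Sum.inr ()))
      simpa [hM, hd, Matrix.mulVec, dotProduct] using this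
    exact h ⟨x, hx0, funext fun k => le_antisymm (e1 k) (e2 k), e3⟩
  obtain ⟨yh, hyh0, hyhM, hyhd⟩ := farkas_ineq M d h'
  set u : κ → ℝ := fun k => yh (Sum.inl k) with hu
  set w : κ → ℝ := fun k => yh (Sum.inr (Sum.inl k)) with hw
  set β : ℝ := yh (Sum.inr (Sum.inr ())) with hβ
  have hβ0 : 0 ≤ β := hyh0 _
  set yv : κ → ℝ := fun k => w k - u k with hyv
  have hMT : ∀ i, Aᵀ.mulVec yv i ≤ β * c i := by
    intro i
    have := hyhM i
    simp only [hM, Matrix.mulVec, dotProduct, Matrix.transpose_apply, Matrix.of_apply,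
      Fintype.sum_sum_type, Sum.elim_inl, Sum.elim_inr, Finset.univ_unique,
      Finset.sum_singleton, neg_mul] at this
    simp only [Matrix.mulVec, dotProduct, Matrix.transpose_apply, hyv, mul_sub,
      Finset.sum_sub_distrib]
    have hsum : ∑ k, A k i * w k - ∑ k, A k i * u k ≤ β * c i := by
      have h1 : ∑ x : κ, A x i * yh (Sum.inl x) + (∑ x : κ, -(A x i * yh (Sum.inr (Sum.inl x))) + c i * yh (Sum.inr (Sum.inr PUnit.unit))) ≥ 0 := by
        simpa using this
      have h2 : ∑ x : κ, -(A x i * yh (Sum.inr (Sum.inl x))) = - ∑ x : κ, A x i * yh (Sum.inr (Sum.inl x)) := by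
        simp
      rw [h2] at h1
      simp only [hu, hw, hβ]
      nlinarith [h1]
    convert hsum using 2
  have hdot : γ * β < b ⬝ᵥ yv := by
    have hyheq : yh = Sum.elim u (Sum.elim w (fun _ => β)) := by
      funext r
      rcases r with k | r
      · rfl
      · rcases r with k | x
        · rfl
        · cases x; rfl
    rw [hyheq, hd] at hyhd
    rw [sumElim_dotProduct_sumElim, sumElim_dotProduct_sumElim] at hyhd
    have hneg : (-b) ⬝ᵥ w = -(b ⬝ᵥ w) := by simp [dotProduct, neg_mul]
    have hunit : (fun _ : Unit => γ) ⬝ᵥ (fun _ => β) = γ * β := by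
      simp [dotProduct]
    rw [hneg, hunit] at hyhd
    have : b ⬝ᵥ yv = b ⬝ᵥ w - b ⬝ᵥ u := by
      simp [hyv, dotProduct, mul_sub, Finset.sum_sub_distrib]
    rw [this]
    linarith
  rcases eq_or_lt_of_le hβ0 with hβz | hβpos
  · right
    refine ⟨yv, fun i => ?_, ?_⟩
    · have := hMT i; rw [← hβz] at this; simpa using this
    · have := hdot; rw [← hβz] at this; simpa using this
  · left
    refine ⟨β⁻¹ • yv, fun i => ?_, ?_⟩
    · rw [Matrix.mulVec_smul]
      have := hMT i
      have h2 : β⁻¹ * (Aᵀ.mulVec yv i) ≤ β⁻¹ * (β * c i) :=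
        mul_le_mul_of_nonneg_left this (inv_nonneg.2 hβ0)
      rw [← mul_assoc, inv_mul_cancel₀ (ne_of_gt hβpos), one_mul] at h2
      simpa using h2
    · have : b ⬝ᵥ (β⁻¹ • yv) = β⁻¹ * (b ⬝ᵥ yv) := by
        simp [dotProduct, Finset.mul_sum, mul_comm, mul_assoc, mul_left_comm]
      rw [this]
      have h2 : β⁻¹ * (γ * β) < β⁻¹ * (b ⬝ᵥ yv) :=
        mul_lt_mul_of_pos_left hdot (inv_pos.2 hβpos)
      calc γ = β⁻¹ * (γ * β) := by field_simp
        _ < _ := h2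
end LP2

theorem lp_strong_duality {ι κ : Type*} [Fintype ι] [Fintype κ] [DecidableEq ι] [DecidableEq κ]
    (A : Matrix κ ι ℝ) (b : κ → ℝ) (c : ι → ℝ)
    (hfeas : ∃ x : ι → ℝ, (∀ i, 0 ≤ x i) ∧ A.mulVec x = b) :
    sSup {t : EReal | ∃ y : κ → ℝ, (∀ i, Aᵀ.mulVec y i ≤ c i) ∧ t = ((b ⬝ᵥ y : ℝ) : EReal)} =
    sInf {t : EReal | ∃ x : ι → ℝ, (∀ i, 0 ≤ x i) ∧ A.mulVec x = b ∧
      t = ((c ⬝ᵥ x : ℝ) : EReal)} := by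
  classical
  obtain ⟨x₀, hx₀0, hx₀A⟩ := hfeas
  set D : Set EReal :=
    {t | ∃ y : κ → ℝ, (∀ i, Aᵀ.mulVec y i ≤ c i) ∧ t = ((b ⬝ᵥ y : ℝ) : EReal)} with hD
  set P : Set EReal :=
    {t | ∃ x : ι → ℝ, (∀ i, 0 ≤ x i) ∧ A.mulVec x = b ∧ t = ((c ⬝ᵥ x : ℝ) : EReal)} with hP
  by_cases hdual : ∃ y, ∀ i, Aᵀ.mulVec y i ≤ c i
  · obtain ⟨y₀, hy₀⟩ := hdual
    have weak : ∀ a ∈ D, ∀ p ∈ P, a ≤ p := by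
      rintro a ⟨y, hy, rfl⟩ p ⟨x, hx0, hxA, rfl⟩
      exact EReal.coe_le_coe_iff.2 (lp_weak A b c hx0 hxA hy)
    have hsup_le : sSup D ≤ sInf P :=
      sSup_le fun a ha => le_sInf fun p hp => weak a ha p hp
    have hInf_le : sInf P ≤ ((c ⬝ᵥ x₀ : ℝ) : EReal) := sInf_le ⟨x₀, hx₀0, hx₀A, rfl⟩
    have hle_Inf : ((b ⬝ᵥ y₀ : ℝ) : EReal) ≤ sInf P :=
      le_sInf fun p hp => weak _ ⟨y₀, hy₀, rfl⟩ p hp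
    have hneT : sInf P ≠ ⊤ := fun h => by
      rw [h] at hInf_le
      exact absurd (top_le_iff.1 hInf_le) (EReal.coe_ne_top _)
    have hneB : sInf P ≠ ⊥ := fun h => by
      rw [h] at hle_Inf
      exact absurd (le_bot_iff.1 hle_Inf) (EReal.coe_ne_bot _)
    set v : ℝ := (sInf P).toReal with hvdef
    have hv : ((v : ℝ) : EReal) = sInf P := EReal.coe_toReal hneT hneB
    have claim : ∀ γ : ℝ, γ < v → (γ : EReal) ≤ sSup D := by
      intro γ hγ
      have hinfeas : ¬ ∃ x, (∀ i, 0 ≤ x i) ∧ A.mulVec x = b ∧ c ⬝ᵥ x ≤ γ := by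
        rintro ⟨x, h1, h2, h3⟩
        have hmem : sInf P ≤ ((c ⬝ᵥ x : ℝ) : EReal) := sInf_le ⟨x, h1, h2, rfl⟩
        rw [← hv] at hmem
        have := EReal.coe_le_coe_iff.1 hmem
        linarith
      rcases lp_sublevel A b c γ hinfeas with ⟨y, hy, hby⟩ | ⟨wv, hw, hbw⟩
      · exact le_trans (EReal.coe_le_coe_iff.2 hby.le) (le_sSup ⟨y, hy, rfl⟩)
      · set s : ℝ := max 0 ((γ + 1 - b ⬝ᵥ y₀) / (b ⬝ᵥ wv)) with hsdef
        have hs0 : 0 ≤ s := le_max_left _ _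
        have hfeasy : ∀ i, Aᵀ.mulVec (fun k => y₀ k + s * wv k) i ≤ c i := by
          intro i
          have he : Aᵀ.mulVec (fun k => y₀ k + s * wv k) i
              = Aᵀ.mulVec y₀ i + s * Aᵀ.mulVec wv i := by
            simp [Matrix.mulVec, dotProduct, mul_add, Finset.sum_add_distrib,
              Finset.mul_sum, mul_comm, mul_left_comm, mul_assoc]
          rw [he]
          have := mul_nonpos_of_nonneg_of_nonpos hs0 (hw i)
          have := hy₀ i
          linarith
        have hval : b ⬝ᵥ (fun k => y₀ k + s * wv k) = b ⬝ᵥ y₀ + s * (b ⬝ᵥ wv) := by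
          simp [dotProduct, mul_add, Finset.sum_add_distrib, Finset.mul_sum,
            mul_comm, mul_left_comm, mul_assoc]
        have hsge : (γ + 1 - b ⬝ᵥ y₀) / (b ⬝ᵥ wv) ≤ s := le_max_right _ _
        have : γ + 1 - b ⬝ᵥ y₀ ≤ s * (b ⬝ᵥ wv) := (div_le_iff₀ hbw).1 hsge
        have hbig : γ ≤ b ⬝ᵥ (fun k => y₀ k + s * wv k) := by rw [hval]; linarith
        exact le_trans (EReal.coe_le_coe_iff.2 hbig)
          (le_sSup ⟨_, hfeasy, rfl⟩)
    have hfin : (v : EReal) ≤ sSup D := by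
      by_contra hlt
      push_neg at hlt
      obtain ⟨γ, h1, h2⟩ := EReal.exists_between_coe_real hlt
      exact absurd (claim γ (EReal.coe_lt_coe_iff.1 h2)) (not_le.2 h1)
    rw [← hv]
    exact le_antisymm (hv ▸ hsup_le) hfin
  · have hDempty : D = ∅ := by
      ext t
      simp only [hD, Set.mem_setOf_eq, Set.mem_empty_iff_false, iff_false]
      rintro ⟨y, hy, _⟩
      exact hdual ⟨y, hy⟩
    obtain ⟨d, hd0, hdA, hdc⟩ := lp_dual_infeasible_ray A c hdual
    have hkey : ∀ r : ℝ, ∃ a ∈ P, a < (r : EReal) := by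
      intro r
      set t : ℝ := max 0 ((r - 1 - c ⬝ᵥ x₀) / (c ⬝ᵥ d)) with htdef
      have ht0 : 0 ≤ t := le_max_left _ _
      have hx : ∀ i, 0 ≤ x₀ i + t * d i :=
        fun i => add_nonneg (hx₀0 i) (mul_nonneg ht0 (hd0 i))
      have hA : A.mulVec (fun i => x₀ i + t * d i) = b := by
        funext k
        have : A.mulVec (fun i => x₀ i + t * d i) k
            = A.mulVec x₀ k + t * A.mulVec d k := by
          simp [Matrix.mulVec, dotProduct, mul_add, Finset.sum_add_distrib,
            Finset.mul_sum, mul_comm, mul_left_comm, mul_assoc]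
        rw [this, hdA, hx₀A]
        simp
      have hobj : c ⬝ᵥ (fun i => x₀ i + t * d i) = c ⬝ᵥ x₀ + t * (c ⬝ᵥ d) := by
        simp [dotProduct, mul_add, Finset.sum_add_distrib, Finset.mul_sum,
          mul_comm, mul_left_comm, mul_assoc]
      have htge : (r - 1 - c ⬝ᵥ x₀) / (c ⬝ᵥ d) ≤ t := le_max_right _ _
      have hmul : t * (c ⬝ᵥ d) ≤ r - 1 - c ⬝ᵥ x₀ := by
        have := (div_le_iff_of_neg hdc).1 htge
        linarith
      have hlt : c ⬝ᵥ (fun i => x₀ i + t * d i) < r := by rw [hobj]; linarith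
      exact ⟨_, ⟨_, hx, hA, rfl⟩, EReal.coe_lt_coe_iff.2 hlt⟩
    rw [hDempty, sSup_empty]
    symm
    rw [sInf_eq_bot]
    intro e he
    induction e using EReal.rec with
    | bot => exact absurd he (lt_irrefl _)
    | coe r => exact hkey r
    | top => exact ⟨((c ⬝ᵥ x₀ : ℝ) : EReal), ⟨x₀, hx₀0, hx₀A, rfl⟩, EReal.coe_lt_top _⟩

section Reduction
variable {n m : ℕ}

/-- The big constraint matrix encoding the RLT primal. -/
def Abig (B : Matrix (Fin n) (Fin m) ℝ) (b : Fin n → ℝ) :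
    Matrix (Fin n ⊕ ((Fin n × Fin m) ⊕ (Fin m ⊕ (Fin m × Fin m))))
      (Fin m ⊕ (Fin m × Fin m)) ℝ :=
  fun r => Sum.elim
    (fun k => Sum.elim (fun j => B k j) (fun _ => 0))
    (Sum.elim
      (fun kj => Sum.elim (fun j' => if j' = kj.2 then -b kj.1 else 0)
                          (fun p => if p.2 = kj.2 then B kj.1 p.1 else 0))
      (Sum.elim
        (fun i => Sum.elim (fun j => if j = i then 1 else 0)
                           (fun p => if p.1 = i then (if p.2 = i then -1 else 0) else 0))
        (fun ij => Sum.elim (fun _ => (0:ℝ))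
          (fun p => (if p.1 = ij.1 then (if p.2 = ij.2 then 1 else 0) else 0)
                  - (if p.1 = ij.2 then (if p.2 = ij.1 then 1 else 0) else 0))))) r

variable (B : Matrix (Fin n) (Fin m) ℝ) (b : Fin n → ℝ)
variable (xv : Fin m ⊕ (Fin m × Fin m) → ℝ)
variable (yv : Fin n ⊕ ((Fin n × Fin m) ⊕ (Fin m ⊕ (Fin m × Fin m))) → ℝ)

lemma Abig_row1 (k : Fin n) :
    (Abig B b).mulVec xv (Sum.inl k) = ∑ j, B k j * xv (Sum.inl j) := by
  simp [Abig, Matrix.mulVec, dotProduct, Fintype.sum_sum_type]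

lemma Abig_row2 (k : Fin n) (j : Fin m) :
    (Abig B b).mulVec xv (Sum.inr (Sum.inl (k, j))) =
      (∑ l, B k l * xv (Sum.inr (l, j))) - b k * xv (Sum.inl j) := by
  simp [Abig, Matrix.mulVec, dotProduct, Fintype.sum_sum_type, Fintype.sum_prod_type,
    ite_mul, zero_mul, neg_mul, Finset.sum_ite_eq, Finset.sum_ite_eq']
  ring

lemma Abig_row3 (i : Fin m) :
    (Abig B b).mulVec xv (Sum.inr (Sum.inr (Sum.inl i))) =
      xv (Sum.inl i) - xv (Sum.inr (i, i)) := by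
  simp [Abig, Matrix.mulVec, dotProduct, Fintype.sum_sum_type, Fintype.sum_prod_type,
    ite_mul, zero_mul, neg_mul, one_mul, Finset.sum_ite_eq, Finset.sum_ite_eq']
  ring

lemma Abig_row4 (i j : Fin m) :
    (Abig B b).mulVec xv (Sum.inr (Sum.inr (Sum.inr (i, j)))) =
      xv (Sum.inr (i, j)) - xv (Sum.inr (j, i)) := by
  simp [Abig, Matrix.mulVec, dotProduct, Fintype.sum_sum_type, Fintype.sum_prod_type,
    ite_mul, zero_mul, one_mul, sub_mul, Finset.sum_sub_distrib,
    Finset.sum_ite_eq, Finset.sum_ite_eq']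

lemma Abig_col1 (j : Fin m) :
    (Abig B b)ᵀ.mulVec yv (Sum.inl j) =
      (∑ k, B k j * yv (Sum.inl k)) - (∑ k, b k * yv (Sum.inr (Sum.inl (k, j))))
        + yv (Sum.inr (Sum.inr (Sum.inl j))) := by
  simp [Abig, Matrix.mulVec, dotProduct, Matrix.transpose_apply, Fintype.sum_sum_type,
    Fintype.sum_prod_type, ite_mul, zero_mul, one_mul, neg_mul,
    Finset.sum_ite_eq, Finset.sum_ite_eq', Finset.sum_neg_distrib]
  ring

lemma Abig_col2 (l j : Fin m) :
    (Abig B b)ᵀ.mulVec yv (Sum.inr (l, j)) =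
      (∑ k, B k l * yv (Sum.inr (Sum.inl (k, j))))
        + (if j = l then -yv (Sum.inr (Sum.inr (Sum.inl l))) else 0)
        + yv (Sum.inr (Sum.inr (Sum.inr (l, j))))
        - yv (Sum.inr (Sum.inr (Sum.inr (j, l)))) := by
  simp [Abig, Matrix.mulVec, dotProduct, Matrix.transpose_apply, Fintype.sum_sum_type,
    Fintype.sum_prod_type, ite_mul, zero_mul, one_mul, neg_mul, sub_mul,
    Finset.sum_sub_distrib, Finset.sum_ite_eq, Finset.sum_ite_eq', Finset.sum_neg_distrib]
  ring

end Reduction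

section Reduction2
variable {n m : ℕ} (B : Matrix (Fin n) (Fin m) ℝ) (b : Fin n → ℝ)
  (Q : Matrix (Fin m) (Fin m) ℝ)

lemma primal_eq :
    {t : EReal | ∃ (x : Fin m → ℝ) (X : Matrix (Fin m) (Fin m) ℝ),
        Xᵀ = X ∧ B.mulVec x = b ∧ (∀ i, 0 ≤ x i) ∧ B * X = Matrix.vecMulVec b x ∧
        (∀ i j, 0 ≤ X i j) ∧ x = Matrix.diag X ∧
        t = ((∑ i, ∑ j, Q i j * X i j : ℝ) : EReal)} =
    {t : EReal | ∃ xv : Fin m ⊕ (Fin m × Fin m) → ℝ, (∀ i, 0 ≤ xv i) ∧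
        (Abig B b).mulVec xv = Sum.elim b (fun _ => 0) ∧
        t = ((Sum.elim (fun _ => (0:ℝ)) (fun p => Q p.1 p.2) ⬝ᵥ xv : ℝ) : EReal)} := by
  ext t
  simp only [Set.mem_setOf_eq]
  constructor
  · rintro ⟨x, X, hXs, hBx, hx0, hBX, hX0, hdiag, rfl⟩
    refine ⟨Sum.elim x (fun p => X p.1 p.2), ?_, ?_, ?_⟩
    · rintro (i | p)
      exacts [hx0 i, hX0 p.1 p.2]
    · funext r
      rcases r with k | r
      · rw [Abig_row1]
        have := congrFun hBx k
        simpa [Matrix.mulVec, dotProduct] using this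
      · rcases r with ⟨k, j⟩ | r
        · rw [Abig_row2]
          have h := congrFun (congrFun hBX k) j
          simp only [Matrix.mul_apply, Matrix.vecMulVec_apply] at h
          simp only [Sum.elim_inl, Sum.elim_inr]
          rw [h]
          ring
        · rcases r with i | ⟨i, j⟩
          · rw [Abig_row3]
            have := congrFun hdiag i
            simp only [Matrix.diag_apply] at this
            simp [this]
          · rw [Abig_row4]
            have : X j i = X i j := congrFun (congrFun hXs i) j
            simp [this]
    · congr 1
      simp [dotProduct, Fintype.sum_sum_type, Fintype.sum_prod_type, mul_comm]
  · rintro ⟨xv, hxv0, hxvA, rfl⟩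
    refine ⟨fun i => xv (Sum.inl i), fun i j => xv (Sum.inr (i, j)), ?_, ?_,
      fun i => hxv0 _, ?_, fun i j => hxv0 _, ?_, ?_⟩
    · ext i j
      have h4 := congrFun hxvA (Sum.inr (Sum.inr (Sum.inr (j, i))))
      rw [Abig_row4] at h4
      simp only [Sum.elim_inr, Matrix.transpose_apply] at h4 ⊢
      change xv (Sum.inr (j, i)) = xv (Sum.inr (i, j))
      linarith
    · funext k
      have h1 := congrFun hxvA (Sum.inl k)
      rw [Abig_row1] at h1
      simpa [Matrix.mulVec, dotProduct] using h1
    · ext k j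
      have h2 := congrFun hxvA (Sum.inr (Sum.inl (k, j)))
      rw [Abig_row2] at h2
      simp only [Sum.elim_inr] at h2
      simp only [Matrix.mul_apply, Matrix.vecMulVec_apply]
      change ∑ l, B k l * xv (Sum.inr (l, j)) = b k * xv (Sum.inl j)
      linarith
    · funext i
      have h3 := congrFun hxvA (Sum.inr (Sum.inr (Sum.inl i)))
      rw [Abig_row3] at h3
      simp only [Sum.elim_inr, Matrix.diag_apply] at h3 ⊢
      change xv (Sum.inl i) = xv (Sum.inr (i, i))
      linarith
    · congr 1
      simp [dotProduct, Fintype.sum_sum_type, Fintype.sum_prod_type, mul_comm]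

lemma dual_eq (hQ : Qᵀ = Q) :
    {t : EReal | ∃ (Y : Matrix (Fin n) (Fin m) ℝ) (z : Fin m → ℝ) (y : Fin n → ℝ),
        Bᵀ.mulVec y ≤ (2 : ℝ) • Yᵀ.mulVec b + z ∧
        (∀ i j, (Bᵀ * Y + Yᵀ * B + Matrix.diagonal z) i j ≤ Q i j) ∧
        t = ((b ⬝ᵥ y : ℝ) : EReal)} =
    {t : EReal | ∃ yv : Fin n ⊕ ((Fin n × Fin m) ⊕ (Fin m ⊕ (Fin m × Fin m))) → ℝ,
        (∀ i, (Abig B b)ᵀ.mulVec yv i ≤ Sum.elim (fun _ => (0:ℝ)) (fun p => Q p.1 p.2) i) ∧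
        t = ((Sum.elim b (fun _ => 0) ⬝ᵥ yv : ℝ) : EReal)} := by
  ext t
  simp only [Set.mem_setOf_eq]
  constructor
  · rintro ⟨Y, z, y, h1, h2, rfl⟩
    refine ⟨Sum.elim y (Sum.elim (fun kj => 2 * Y kj.1 kj.2)
      (Sum.elim (fun i => -z i) (fun p => -(∑ k, B k p.1 * Y k p.2)))), ?_, ?_⟩
    · rintro (j | ⟨l, j⟩)
      · rw [Abig_col1]
        simp only [Sum.elim_inl, Sum.elim_inr]
        have hy := h1 j
        simp only [Pi.add_apply, Pi.smul_apply, smul_eq_mul, Matrix.mulVec, dotProduct,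
          Matrix.transpose_apply] at hy
        have e1 : ∑ k, b k * (2 * Y k j) = 2 * ∑ k, Y k j * b k := by
          rw [Finset.mul_sum]
          exact Finset.sum_congr rfl fun k _ => by ring
        rw [e1]
        linarith
      · rw [Abig_col2]
        simp only [Sum.elim_inl, Sum.elim_inr]
        have hq := h2 l j
        simp only [Matrix.add_apply, Matrix.mul_apply, Matrix.diagonal_apply,
          Matrix.transpose_apply] at hq
        have e1 : ∑ k, B k l * (2 * Y k j) = 2 * ∑ k, B k l * Y k j := by
          rw [Finset.mul_sum]
          exact Finset.sum_congr rfl fun k _ => by ring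
        rw [e1]
        have e2 : ∑ k, Y k l * B k j = ∑ k, B k j * Y k l :=
          Finset.sum_congr rfl fun k _ => by ring
        rw [e2] at hq
        by_cases hlj : l = j
        · subst hlj
          simp only [eq_self_iff_true, if_true, if_pos rfl] at hq ⊢
          linarith
        · rw [if_neg hlj] at hq
          rw [if_neg (fun h => hlj h.symm)]
          linarith
    · congr 1
      simp [dotProduct, Fintype.sum_sum_type]
  · rintro ⟨yv, hle, rfl⟩
    refine ⟨fun k j => yv (Sum.inr (Sum.inl (k, j))) / 2,
      fun i => -yv (Sum.inr (Sum.inr (Sum.inl i))), fun k => yv (Sum.inl k), ?_, ?_, ?_⟩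
    · intro j
      have h := hle (Sum.inl j)
      rw [Abig_col1] at h
      simp only [Sum.elim_inl] at h
      simp only [Pi.add_apply, Pi.smul_apply, smul_eq_mul, Matrix.mulVec, dotProduct,
        Matrix.transpose_apply]
      have e1 : 2 * ∑ k, yv (Sum.inr (Sum.inl (k, j))) / 2 * b k
          = ∑ k, b k * yv (Sum.inr (Sum.inl (k, j))) := by
        rw [Finset.mul_sum]
        exact Finset.sum_congr rfl fun k _ => by ring
      change _ ≤ 2 * ∑ k, yv (Sum.inr (Sum.inl (k, j))) / 2 * b k + _
      rw [e1]
      linarith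
    · intro l j
      have ha := hle (Sum.inr (l, j))
      have hb := hle (Sum.inr (j, l))
      rw [Abig_col2] at ha hb
      simp only [Sum.elim_inr] at ha hb
      have hqs : Q j l = Q l j := congrFun (congrFun hQ l) j
      simp only [Matrix.add_apply, Matrix.mul_apply, Matrix.diagonal_apply,
        Matrix.transpose_apply]
      have e1 : ∑ k, B k l * (yv (Sum.inr (Sum.inl (k, j))) / 2)
          = (∑ k, B k l * yv (Sum.inr (Sum.inl (k, j)))) / 2 := by
        rw [Finset.sum_div]
        exact Finset.sum_congr rfl fun k _ => by ring
      have e2 : ∑ k, (yv (Sum.inr (Sum.inl (k, l))) / 2) * B k j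
          = (∑ k, B k j * yv (Sum.inr (Sum.inl (k, l)))) / 2 := by
        rw [Finset.sum_div]
        exact Finset.sum_congr rfl fun k _ => by ring
      change ∑ k, B k l * (yv (Sum.inr (Sum.inl (k, j))) / 2) + ∑ k, (yv (Sum.inr (Sum.inl (k, l))) / 2) * B k j + (if l = j then -yv (Sum.inr (Sum.inr (Sum.inl l))) else 0) ≤ Q l j
      rw [e1, e2]
      by_cases hlj : l = j
      · subst hlj
        simp only [eq_self_iff_true, if_true, if_pos rfl] at ha hb ⊢
        linarith
      · rw [if_neg (fun h => hlj h.symm)] at ha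
        rw [if_neg hlj] at hb
        rw [if_neg hlj]
        rw [hqs] at hb
        linarith
    · congr 1
      simp [dotProduct, Fintype.sum_sum_type]

end Reduction2

end Aux

/-- **v_LBB' = v_RLT1.** Assume `Q` is symmetric and
`K = {x ∈ {0,1}^m : Bx = b}` is nonempty. Then, as extended reals, the
linearization-based bound
`sup{bᵀy : Bᵀy ≤ 2Yᵀb + z, BᵀY + YᵀB + Diag(z) ≤ Q}` equals the first-level RLT bound
`inf{⟨Q,X⟩ : Bx = b, x ≥ 0, BX = bxᵀ, X ≥ 0, x = diag(X), X symmetric}`. -/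
theorem stmt7 {n m : ℕ} (B : Matrix (Fin n) (Fin m) ℝ) (b : Fin n → ℝ)
    (Q : Matrix (Fin m) (Fin m) ℝ) (hQ : Qᵀ = Q)
    (hKne : ∃ x : Fin m → ℝ, B.mulVec x = b ∧ ∀ i, x i = 0 ∨ x i = 1) :
    sSup {t : EReal | ∃ (Y : Matrix (Fin n) (Fin m) ℝ) (z : Fin m → ℝ) (y : Fin n → ℝ),
        Bᵀ.mulVec y ≤ (2 : ℝ) • Yᵀ.mulVec b + z ∧
        (∀ i j, (Bᵀ * Y + Yᵀ * B + Matrix.diagonal z) i j ≤ Q i j) ∧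
        t = ((b ⬝ᵥ y : ℝ) : EReal)} =
    sInf {t : EReal | ∃ (x : Fin m → ℝ) (X : Matrix (Fin m) (Fin m) ℝ),
        Xᵀ = X ∧
        B.mulVec x = b ∧
        (∀ i, 0 ≤ x i) ∧
        B * X = Matrix.vecMulVec b x ∧
        (∀ i j, 0 ≤ X i j) ∧
        x = Matrix.diag X ∧
        t = ((∑ i, ∑ j, Q i j * X i j : ℝ) : EReal)} := by
  classical
  rw [dual_eq B b Q hQ, primal_eq B b Q]
  apply lp_strong_duality
  obtain ⟨x, hBx, h01⟩ := hKne
  have hx0 : ∀ i, 0 ≤ x i := fun i => by rcases h01 i with h | h <;> simp [h]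
  have hmem : ((∑ i, ∑ j, Q i j * (x i * x j) : ℝ) : EReal) ∈
      {t : EReal | ∃ (x : Fin m → ℝ) (X : Matrix (Fin m) (Fin m) ℝ),
        Xᵀ = X ∧ B.mulVec x = b ∧ (∀ i, 0 ≤ x i) ∧ B * X = Matrix.vecMulVec b x ∧
        (∀ i j, 0 ≤ X i j) ∧ x = Matrix.diag X ∧
        t = ((∑ i, ∑ j, Q i j * X i j : ℝ) : EReal)} := by
    refine ⟨x, fun i j => x i * x j, ?_, hBx, hx0, ?_, ?_, ?_, rfl⟩
    · ext i j
      show x j * x i = x i * x j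
      ring
    · ext k j
      simp only [Matrix.mul_apply, Matrix.vecMulVec_apply]
      change ∑ l, B k l * (x l * x j) = b k * x j
      have := congrFun hBx k
      simp only [Matrix.mulVec, dotProduct] at this
      rw [← this, Finset.sum_mul]
      exact Finset.sum_congr rfl fun l _ => by ring
    · intro i j
      exact mul_nonneg (hx0 i) (hx0 j)
    · funext i
      show x i = x i * x i
      rcases h01 i with h | h <;> simp [h]
  have hmem2 := (primal_eq B b Q) ▸ hmem
  obtain ⟨xv, hxv0, hxvA, _⟩ := hmem2
  exact ⟨xv, hxv0, hxvA⟩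
end

section
/- (Weak duality of the linearization-based relaxation) Let Q₁,…,Q_k ∈ ℝ^{m×m} be linearizable with linearization vectors c₁,…,c_k, let 𝒜(α) = Σ_{i=1}^k α_i Q_i and C = [c₁,…,c_k] ∈ ℝ^{m×k}. If α ∈ ℝ^k and y ∈ ℝ^n satisfy Bᵀy ≤ Cα and 𝒜(α) ≤ Q entrywise, then bᵀy ≤ xᵀQx for every x ∈ K. In particular the optimal value of the linear program max{ bᵀy : Bᵀy ≤ Cα, 𝒜(α) ≤ Q } is a lower bound for min_{x∈K} xᵀQx. -/
open Matrix

/-- **weak duality of the linearization-based relaxation.**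
Let `Q₁,…,Q_k` be linearizable with linearization vectors `c₁,…,c_k`, let
`𝒜(α) = Σ α_i Q_i` and `C = [c₁,…,c_k]`. If `α` and `y` satisfy `Bᵀy ≤ Cα` and
`𝒜(α) ≤ Q` entrywise, then `bᵀy ≤ xᵀQx` for every `x ∈ K`; hence the optimal value of
the LP `max{bᵀy : Bᵀy ≤ Cα, 𝒜(α) ≤ Q}` is a lower bound for `min_{x∈K} xᵀQx`. -/
theorem stmt10 {n m k : ℕ} (B : Matrix (Fin n) (Fin m) ℝ) (b : Fin n → ℝ)
    (Q : Matrix (Fin m) (Fin m) ℝ)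
    (Qi : Fin k → Matrix (Fin m) (Fin m) ℝ) (c : Fin k → Fin m → ℝ)
    (hlin : ∀ i, ∀ x : Fin m → ℝ, B.mulVec x = b → (∀ j, x j = 0 ∨ x j = 1) →
      x ⬝ᵥ (Qi i).mulVec x = c i ⬝ᵥ x)
    (C : Matrix (Fin m) (Fin k) ℝ) (hC : C = Matrix.of fun i j => c j i)
    (α : Fin k → ℝ) (y : Fin n → ℝ)
    (h₁ : Bᵀ.mulVec y ≤ C.mulVec α)
    (h₂ : ∀ i j, (∑ l, α l • Qi l) i j ≤ Q i j) :
    ∀ x : Fin m → ℝ, B.mulVec x = b → (∀ j, x j = 0 ∨ x j = 1) →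
      b ⬝ᵥ y ≤ x ⬝ᵥ Q.mulVec x := by
  intro x hx h01
  have xnn : ∀ j, 0 ≤ x j := by
    intro j; rcases h01 j with h | h <;> rw [h] <;> norm_num
  have step1 : b ⬝ᵥ y = x ⬝ᵥ Bᵀ.mulVec y := by
    rw [Matrix.dotProduct_mulVec, Matrix.vecMul_transpose, hx,
      dotProduct_comm]
  have step2 : x ⬝ᵥ Bᵀ.mulVec y ≤ x ⬝ᵥ C.mulVec α := by
    apply Finset.sum_le_sum
    intro i _
    exact mul_le_mul_of_nonneg_left (h₁ i) (xnn i)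
  have step3 : x ⬝ᵥ C.mulVec α = ∑ l, α l * (c l ⬝ᵥ x) := by
    subst hC
    simp only [dotProduct, Matrix.mulVec, Matrix.of_apply,
      Finset.mul_sum, Finset.sum_mul]
    rw [Finset.sum_comm]
    apply Finset.sum_congr rfl; intro l _
    apply Finset.sum_congr rfl; intro i _
    ring
  have step4 : ∑ l, α l * (c l ⬝ᵥ x) = x ⬝ᵥ (∑ l, α l • Qi l).mulVec x := by
    have hmv : (∑ l, α l • Qi l).mulVec x = ∑ l, α l • ((Qi l).mulVec x) := by
      ext j
      simp only [Matrix.mulVec, dotProduct, Matrix.sum_apply,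
        Matrix.smul_apply, smul_eq_mul, Pi.smul_apply, Finset.sum_apply,
        Finset.sum_mul, Finset.mul_sum]
      rw [Finset.sum_comm]
      apply Finset.sum_congr rfl; intro l _
      apply Finset.sum_congr rfl; intro i _
      ring
    have hdp : ∀ v : Fin k → Fin m → ℝ, x ⬝ᵥ (∑ l, v l) = ∑ l, x ⬝ᵥ v l := by
      intro v
      simp only [dotProduct, Finset.sum_apply, Finset.mul_sum]
      exact Finset.sum_comm
    rw [hmv, hdp]
    apply Finset.sum_congr rfl; intro l _
    rw [dotProduct_smul, smul_eq_mul, hlin l x hx h01]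
  have step5 : x ⬝ᵥ (∑ l, α l • Qi l).mulVec x ≤ x ⬝ᵥ Q.mulVec x := by
    simp only [dotProduct, Matrix.mulVec]
    apply Finset.sum_le_sum
    intro i _
    apply mul_le_mul_of_nonneg_left _ (xnn i)
    apply Finset.sum_le_sum
    intro j _
    exact mul_le_mul_of_nonneg_right (h₂ i j) (xnn j)
  calc b ⬝ᵥ y = x ⬝ᵥ Bᵀ.mulVec y := step1
    _ ≤ x ⬝ᵥ C.mulVec α := step2
    _ = ∑ l, α l * (c l ⬝ᵥ x) := step3
    _ = x ⬝ᵥ (∑ l, α l • Qi l).mulVec x := step4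
    _ ≤ x ⬝ᵥ Q.mulVec x := step5
end

section
/- Fix for each basic arc e a critical path P_e. If two cost vectors c₁, c₂ ∈ ℝ^m are both in reduced form and c₁ᵀχ(P_e) = c₂ᵀχ(P_e) for every basic arc e (where χ(P_e) ∈ {0,1}^m is the characteristic vector of P_e), then c₁ = c₂. In particular, the reduced form of a linearization vector of a linearizable cost matrix Q is uniquely determined by the quadratic costs of the critical paths. -/
open Matrix

/-- `IsPathFrom src tgt u v L` : the list of arcs `L` forms a path from vertex `u` to
vertex `v` in the digraph whose arc `e` goes from `src e` to `tgt e`. -/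
def IsPathFrom {n m : ℕ} (src tgt : Fin m → Fin n) : Fin n → Fin n → List (Fin m) → Prop
  | u, v, [] => u = v
  | u, v, e :: L => src e = u ∧ IsPathFrom src tgt (tgt e) v L

/-- Characteristic vector of a set of arcs (given as a list). -/
def chi {m : ℕ} (L : List (Fin m)) : Fin m → ℝ := fun e => if e ∈ L then 1 else 0

/-- An arc is non-basic if its source is a transshipment vertex (different from the
source `s` and the target `t`) and it is the outgoing arc of smallest label of its
source vertex.  All remaining arcs are basic. -/
def IsNonbasic {n m : ℕ} (src : Fin m → Fin n) (s t : Fin n) (e : Fin m) : Prop :=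
  src e ≠ s ∧ src e ≠ t ∧ ∀ f, src f = src e → e ≤ f

/-- `L` is a critical path for the basic arc `e`: an `s`-`(src e)` path, followed by the
arc `e`, followed by a `(tgt e)`-`t` path consisting only of non-basic arcs. -/
def IsCriticalPath {n m : ℕ} (src tgt : Fin m → Fin n) (s t : Fin n) (e : Fin m)
    (L : List (Fin m)) : Prop :=
  ∃ L₁ L₂, L = L₁ ++ e :: L₂ ∧ IsPathFrom src tgt s (src e) L₁ ∧
    IsPathFrom src tgt (tgt e) t L₂ ∧ ∀ f ∈ L₂, IsNonbasic src s t f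

/-- Fix for each basic arc `e` a critical path `P e`.  If two cost
vectors `c₁, c₂` are both in reduced form (vanishing on non-basic arcs) and give the
same cost to every critical path, then `c₁ = c₂`.  In particular, the reduced form of a
linearization vector is uniquely determined by the costs of the critical paths. -/
theorem stmt11 {n m : ℕ} (src tgt : Fin m → Fin n) (s t : Fin n)
    (htopo : ∀ e, src e < tgt e)
    (hcover : ∀ v : Fin n, ∃ L₁ L₂,
      IsPathFrom src tgt s v L₁ ∧ IsPathFrom src tgt v t L₂)
    (P : Fin m → List (Fin m))
    (hP : ∀ e, ¬ IsNonbasic src s t e → IsCriticalPath src tgt s t e (P e))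
    (c₁ c₂ : Fin m → ℝ)
    (h₁ : ∀ e, IsNonbasic src s t e → c₁ e = 0)
    (h₂ : ∀ e, IsNonbasic src s t e → c₂ e = 0)
    (heq : ∀ e, ¬ IsNonbasic src s t e → c₁ ⬝ᵥ chi (P e) = c₂ ⬝ᵥ chi (P e)) :
    c₁ = c₂ := by
  -- d := c₁ - c₂ vanishes on nonbasic arcs and has zero dot product with each χ(P e)
  have hpath : ∀ (L : List (Fin m)) (u v : Fin n), IsPathFrom src tgt u v L →
      u ≤ v ∧ ∀ f ∈ L, u ≤ src f ∧ tgt f ≤ v := by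
    intro L
    induction L with
    | nil => intro u v h; exact ⟨le_of_eq h, by simp⟩
    | cons e L ih =>
      intro u v h
      obtain ⟨hsrc, hrest⟩ := h
      obtain ⟨hle, hall⟩ := ih (tgt e) v hrest
      refine ⟨?_, ?_⟩
      · exact le_trans (hsrc ▸ (htopo e).le) hle
      · intro f hf
        rcases List.mem_cons.mp hf with rfl | hf
        · exact ⟨le_of_eq hsrc.symm, hle⟩
        · obtain ⟨h1, h2⟩ := hall f hf
          exact ⟨le_trans (hsrc ▸ (htopo e).le) h1, h2⟩
  have dot_chi : ∀ (c : Fin m → ℝ) (L : List (Fin m)) (e : Fin m), e ∈ L →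
      (∀ f ∈ L, f ≠ e → c f = 0) → c ⬝ᵥ chi L = c e := by
    intro c L e he h0
    have : ∀ f, c f * (if f ∈ L then (1:ℝ) else 0) = if f = e then c e else 0 := by
      intro f
      by_cases hfe : f = e
      · subst hfe; simp [he]
      · by_cases hfL : f ∈ L
        · simp [hfL, hfe, h0 f hfL hfe]
        · simp [hfL, hfe]
    simp only [dotProduct, chi, this]
    simp
  have key : ∀ k : ℕ, ∀ e : Fin m, (src e : ℕ) = k → ¬ IsNonbasic src s t e →
      c₁ e = c₂ e := by
    intro k
    induction k using Nat.strong_induction_on with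
    | _ k IH =>
      intro e hk hbasic
      obtain ⟨L₁, L₂, hL, hp1, hp2, hnb⟩ := hP e hbasic
      have hdot := heq e hbasic
      rw [hL] at hdot
      set d : Fin m → ℝ := c₁ - c₂ with hd
      have hdzero : ∀ f ∈ L₁ ++ e :: L₂, f ≠ e → d f = 0 := by
        intro f hf hfe
        rcases List.mem_append.mp hf with hf1 | hf2
        · -- f ∈ L₁: tgt f ≤ src e, so src f < k
          have hlt : (src f : ℕ) < k := by
            have := (hpath L₁ s (src e) hp1).2 f hf1
            have : tgt f ≤ src e := this.2
            have := lt_of_lt_of_le (htopo f) this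
            omega
          by_cases hnbf : IsNonbasic src s t f
          · simp [hd, Pi.sub_apply, h₁ f hnbf, h₂ f hnbf]
          · simp [hd, Pi.sub_apply, IH (src f) hlt f rfl hnbf]
        · rcases List.mem_cons.mp hf2 with rfl | hf2
          · exact absurd rfl hfe
          · have hnbf := hnb f hf2
            simp [hd, Pi.sub_apply, h₁ f hnbf, h₂ f hnbf]
      have he : e ∈ L₁ ++ e :: L₂ := by simp
      have : d ⬝ᵥ chi (L₁ ++ e :: L₂) = d e := dot_chi d _ e he hdzero
      rw [hd, sub_dotProduct, hdot, sub_self] at this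
      have : c₁ e - c₂ e = 0 := by
        have h' := this.symm
        simpa [hd, Pi.sub_apply] using h'
      linarith
  funext e
  by_cases hnbf : IsNonbasic src s t e
  · rw [h₁ e hnbf, h₂ e hnbf]
  · exact key (src e) e rfl hnbf
end

section
/- Let Q ∈ ℝ^{m×m} (zero diagonal) be a linearizable cost matrix for the QSPP. If c ∈ ℝ^m is a linearization vector of Q that is in reduced form, and p ∈ ℝ^m is the pseudo-linearization vector of Q (the unique reduced-form vector with pᵀχ(P_e) = χ(P_e)ᵀQχ(P_e) for every critical path P_e), then c = p. -/
open Matrix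

lemma path_start_le {n m : ℕ} (src tgt : Fin m → Fin n) (htopo : ∀ e, src e < tgt e) :
    ∀ (L : List (Fin m)) (u v : Fin n), IsPathFrom src tgt u v L → u ≤ v := by
  intro L
  induction L with
  | nil => intro u v h; exact le_of_eq h
  | cons e L ih =>
      rintro u v ⟨he, hL⟩
      calc u = src e := he.symm
        _ ≤ tgt e := (htopo e).le
        _ ≤ v := ih _ _ hL

lemma path_tgt_le {n m : ℕ} (src tgt : Fin m → Fin n) (htopo : ∀ e, src e < tgt e) :
    ∀ (L : List (Fin m)) (u v : Fin n), IsPathFrom src tgt u v L →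
      ∀ f ∈ L, tgt f ≤ v := by
  intro L
  induction L with
  | nil => intro u v _ f hf; cases hf
  | cons e L ih =>
      rintro u v ⟨he, hL⟩ f hf
      rcases List.mem_cons.mp hf with rfl | hf
      · exact path_start_le src tgt htopo L _ _ hL
      · exact ih _ _ hL f hf

lemma path_append {n m : ℕ} (src tgt : Fin m → Fin n) :
    ∀ (L₁ L₂ : List (Fin m)) (u v w : Fin n), IsPathFrom src tgt u v L₁ →
      IsPathFrom src tgt v w L₂ → IsPathFrom src tgt u w (L₁ ++ L₂) := by
  intro L₁
  induction L₁ with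
  | nil => intro L₂ u v w h1 h2; cases h1; exact h2
  | cons e L ih =>
      rintro L₂ u v w ⟨he, hL⟩ h2
      exact ⟨he, ih _ _ _ _ hL h2⟩

/-- Let `Q` (zero diagonal) be a linearizable cost matrix of the QSPP.
If `c` is a linearization vector of `Q` in reduced form and `p` is the
pseudo-linearization vector of `Q` (the reduced-form vector whose linear cost on each
critical path equals that path's quadratic cost), then `c = p`. -/
theorem stmt12 {n m : ℕ} (src tgt : Fin m → Fin n) (s t : Fin n)
    (htopo : ∀ e, src e < tgt e)
    (hcover : ∀ v : Fin n, ∃ L₁ L₂,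
      IsPathFrom src tgt s v L₁ ∧ IsPathFrom src tgt v t L₂)
    (P : Fin m → List (Fin m))
    (hP : ∀ e, ¬ IsNonbasic src s t e → IsCriticalPath src tgt s t e (P e))
    (Q : Matrix (Fin m) (Fin m) ℝ) (hdiag : ∀ e, Q e e = 0)
    (c : Fin m → ℝ)
    (hclin : ∀ L, IsPathFrom src tgt s t L →
      chi L ⬝ᵥ Q.mulVec (chi L) = c ⬝ᵥ chi L)
    (hcred : ∀ e, IsNonbasic src s t e → c e = 0)
    (p : Fin m → ℝ)
    (hpred : ∀ e, IsNonbasic src s t e → p e = 0)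
    (hpcrit : ∀ e, ¬ IsNonbasic src s t e →
      p ⬝ᵥ chi (P e) = chi (P e) ⬝ᵥ Q.mulVec (chi (P e))) :
    c = p := by
  have key : ∀ k : ℕ, ∀ e : Fin m, (src e : ℕ) = k → c e = p e := by
    intro k
    induction k using Nat.strong_induction_on with
    | _ k IH =>
      intro e hk
      by_cases hb : IsNonbasic src s t e
      · rw [hcred e hb, hpred e hb]
      · obtain ⟨L₁, L₂, hPe, h1, h2, h3⟩ := hP e hb
        have hpath : IsPathFrom src tgt s t (P e) := by
          rw [hPe]
          exact path_append src tgt L₁ (e :: L₂) s (src e) t h1 ⟨rfl, h2⟩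
        have hcp : c ⬝ᵥ chi (P e) = p ⬝ᵥ chi (P e) :=
          (hclin (P e) hpath).symm.trans (hpcrit e hb).symm
        have hsum : ∑ f, (c f - p f) * chi (P e) f = 0 := by
          have : ∑ f, (c f - p f) * chi (P e) f
              = c ⬝ᵥ chi (P e) - p ⬝ᵥ chi (P e) := by
            simp [dotProduct, sub_mul, Finset.sum_sub_distrib]
          rw [this, hcp, sub_self]
        have hsingle : ∑ f, (c f - p f) * chi (P e) f = c e - p e := by
          rw [Fintype.sum_eq_single e]
          · have he : e ∈ P e := by rw [hPe]; simp
            simp [chi, he]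
          · intro f hf
            by_cases hfL : f ∈ P e
            · have hd : c f - p f = 0 := by
                rw [hPe] at hfL
                rcases List.mem_append.mp hfL with hfL1 | hfL2
                · by_cases hnb : IsNonbasic src s t f
                  · rw [hcred f hnb, hpred f hnb, sub_self]
                  · have htle : tgt f ≤ src e :=
                      path_tgt_le src tgt htopo L₁ s (src e) h1 f hfL1
                    have hlt : (src f : ℕ) < k := by
                      rw [← hk]
                      exact lt_of_lt_of_le (htopo f) htle
                    rw [IH _ hlt f rfl, sub_self]
                · rcases List.mem_cons.mp hfL2 with rfl | hfL2
                  · exact absurd rfl hf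
                  · rw [hcred f (h3 f hfL2), hpred f (h3 f hfL2), sub_self]
              rw [hd, zero_mul]
            · simp [chi, hfL]
        have := hsingle.symm.trans hsum
        linarith
  funext e
  exact key (src e : ℕ) e rfl
end

section
/- For each vertex v of G, let p_v denote the pseudo-linearization vector of Q_v on G_v, let R_u denote the map sending a cost vector on G_u to its reduced form (the unique equivalent cost vector vanishing on the non-basic arcs of G_u), and for an arc e = (u,v) let T_e be the map of Lemma on branchings. Then the pseudo-linearization vector p_t is a linearization vector of Q_t if and only if (R_u ∘ T_e)(p_v) = p_u for every arc e = (u,v) ∈ A. -/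
open Matrix

/-- The arc set `A_v` of the subgraph `G_v`: all arcs lying on some `s`-`v` path. -/
def ArcsTo {n m : ℕ} (src tgt : Fin m → Fin n) (s v : Fin n) : Set (Fin m) :=
  {e | ∃ L, IsPathFrom src tgt s v L ∧ e ∈ L}

/-- An arc of `G_v` is non-basic (in `G_v`, with target `v`) if its source is a
transshipment vertex of `G_v` (different from `s`; no arc of `A_v` leaves `v`) and it is
the outgoing arc of `A_v` with smallest label at its source vertex. -/
def IsNonbasicIn {n m : ℕ} (src tgt : Fin m → Fin n) (s v : Fin n) (e : Fin m) : Prop :=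
  e ∈ ArcsTo src tgt s v ∧ src e ≠ s ∧
    ∀ f ∈ ArcsTo src tgt s v, src f = src e → e ≤ f

/-- `L` is a critical path in `G_v` for the basic arc `e` of `G_v`: an `s`-`(src e)`
path, then the arc `e`, then the unique `(tgt e)`-`v` path of non-basic arcs of `G_v`. -/
def IsCriticalPathIn {n m : ℕ} (src tgt : Fin m → Fin n) (s v : Fin n) (e : Fin m)
    (L : List (Fin m)) : Prop :=
  ∃ L₁ L₂, L = L₁ ++ e :: L₂ ∧ IsPathFrom src tgt s (src e) L₁ ∧
    IsPathFrom src tgt (tgt e) v L₂ ∧ ∀ f ∈ L₂, IsNonbasicIn src tgt s v f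

/-- The map `T_e` of the branching lemma for an arc `e = (u,v)`, sending a cost vector
on `G_v` to a cost vector on `G_u`: `(T_e(c))_{e'} = c_{e'} − 2q_{e,e'}`, with the
additional term `+ c_e` when the arc `e'` leaves the source vertex `s`. -/
def Tmap {n m : ℕ} (src : Fin m → Fin n) (s : Fin n) (Q : Matrix (Fin m) (Fin m) ℝ)
    (e : Fin m) (c : Fin m → ℝ) : Fin m → ℝ :=
  fun e' => if src e' = s then c e' - 2 * Q e e' + c e else c e' - 2 * Q e e'

namespace Stmt14Aux
variable {n m : ℕ} {src tgt : Fin m → Fin n} {Q : Matrix (Fin m) (Fin m) ℝ}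

lemma path_le (htopo : ∀ e, src e < tgt e) :
    ∀ {L : List (Fin m)} {u v : Fin n}, IsPathFrom src tgt u v L → u ≤ v
  | [], _, _, h => le_of_eq h
  | e :: L, u, v, h => by
      obtain ⟨h1, h2⟩ := h
      exact le_trans (le_of_lt (h1 ▸ htopo e)) (path_le htopo h2)

lemma path_nil (htopo : ∀ e, src e < tgt e) {L : List (Fin m)} {u : Fin n}
    (h : IsPathFrom src tgt u u L) : L = [] := by
  cases L with
  | nil => rfl
  | cons e L =>
      obtain ⟨h1, h2⟩ := h
      exact absurd (lt_of_lt_of_le (h1 ▸ htopo e) (path_le htopo h2)) (lt_irrefl u)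

lemma mem_src_ge (htopo : ∀ e, src e < tgt e) :
    ∀ {L : List (Fin m)} {u v : Fin n}, IsPathFrom src tgt u v L →
      ∀ f ∈ L, u ≤ src f
  | [], _, _, _, f, hf => absurd hf List.not_mem_nil
  | e :: L, u, v, h, f, hf => by
      obtain ⟨h1, h2⟩ := h
      rcases List.mem_cons.mp hf with rfl | hf'
      · exact le_of_eq h1.symm
      · exact le_trans (le_of_lt (h1 ▸ htopo e)) (mem_src_ge htopo h2 f hf')

lemma mem_tgt_le (htopo : ∀ e, src e < tgt e) :
    ∀ {L : List (Fin m)} {u v : Fin n}, IsPathFrom src tgt u v L →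
      ∀ f ∈ L, tgt f ≤ v
  | [], _, _, _, f, hf => absurd hf List.not_mem_nil
  | e :: L, u, v, h, f, hf => by
      obtain ⟨h1, h2⟩ := h
      rcases List.mem_cons.mp hf with rfl | hf'
      · exact path_le htopo h2
      · exact mem_tgt_le htopo h2 f hf'

lemma path_nodup (htopo : ∀ e, src e < tgt e) :
    ∀ {L : List (Fin m)} {u v : Fin n}, IsPathFrom src tgt u v L → L.Nodup
  | [], _, _, _ => List.nodup_nil
  | e :: L, u, v, h => by
      obtain ⟨h1, h2⟩ := h
      refine List.nodup_cons.mpr ⟨fun he => ?_, path_nodup htopo h2⟩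
      exact absurd (lt_of_lt_of_le (htopo e) (mem_src_ge htopo h2 e he)) (lt_irrefl _)

lemma path_append : ∀ {X Y : List (Fin m)} {a b c : Fin n},
    IsPathFrom src tgt a b X → IsPathFrom src tgt b c Y → IsPathFrom src tgt a c (X ++ Y)
  | [], Y, a, b, c, hX, hY => by
      have : a = b := hX
      simpa [this] using hY
  | e :: X, Y, a, b, c, hX, hY => by
      obtain ⟨h1, h2⟩ := hX
      exact ⟨h1, path_append h2 hY⟩

lemma path_append_split : ∀ {X Y : List (Fin m)} {a c : Fin n},
    IsPathFrom src tgt a c (X ++ Y) → ∃ b, IsPathFrom src tgt a b X ∧ IsPathFrom src tgt b c Y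
  | [], Y, a, c, h => ⟨a, rfl, h⟩
  | e :: X, Y, a, c, h => by
      obtain ⟨h1, h2⟩ := h
      obtain ⟨b, hb1, hb2⟩ := path_append_split h2
      exact ⟨b, ⟨h1, hb1⟩, hb2⟩

lemma chi_nil : chi ([] : List (Fin m)) = 0 := by
  funext f; simp [chi]

lemma chi_cons {e : Fin m} {L : List (Fin m)} (he : e ∉ L) :
    chi (e :: L) = chi L + Pi.single e 1 := by
  funext f
  by_cases hf : f = e
  · subst hf; simp [chi, he]
  · simp [chi, hf, Pi.single_apply]

lemma chi_append_single {e : Fin m} {L : List (Fin m)} (he : e ∉ L) :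
    chi (L ++ [e]) = chi L + Pi.single e 1 := by
  funext f
  by_cases hf : f = e
  · subst hf; simp [chi, he]
  · simp [chi, hf, Pi.single_apply]

lemma dot_chi (c : Fin m → ℝ) : ∀ {L : List (Fin m)}, L.Nodup →
    c ⬝ᵥ chi L = (L.map c).sum := by
  intro L hL
  induction L with
  | nil => simp [chi_nil]
  | cons e L ih =>
      have he : e ∉ L := (List.nodup_cons.mp hL).1
      rw [chi_cons he, dotProduct_add, ih (List.nodup_cons.mp hL).2, dotProduct_single]
      simp [add_comm]

lemma sum_map_lin (c q : Fin m → ℝ) : ∀ L : List (Fin m),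
    (L.map (fun f => c f - 2 * q f)).sum = (L.map c).sum - 2 * (L.map q).sum := by
  intro L
  induction L with
  | nil => simp
  | cons e L ih => simp [ih]; ring


lemma quad_append (hsym : Qᵀ = Q) (hdiag : ∀ e, Q e e = 0)
    {e : Fin m} {L : List (Fin m)} (he : e ∉ L) :
    chi (L ++ [e]) ⬝ᵥ Q.mulVec (chi (L ++ [e])) =
      chi L ⬝ᵥ Q.mulVec (chi L) + 2 * (Q e ⬝ᵥ chi L) := by
  have hQ : ∀ i j, Q i j = Q j i := by
    intro i j; conv_lhs => rw [← hsym, transpose_apply]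
  rw [chi_append_single he, mulVec_add, dotProduct_add, add_dotProduct, add_dotProduct]
  have h1 : Pi.single e (1:ℝ) ⬝ᵥ Q.mulVec (chi L) = Q e ⬝ᵥ chi L := by
    rw [single_dotProduct, one_mul]; rfl
  have h2 : chi L ⬝ᵥ Q.mulVec (Pi.single e 1) = Q e ⬝ᵥ chi L := by
    have hmv : Q.mulVec (Pi.single e 1) = fun i => Q i e := by
      funext i; show Q i ⬝ᵥ Pi.single e 1 = Q i e
      rw [dotProduct_single, mul_one]
    rw [hmv]
    simp only [dotProduct]
    exact Finset.sum_congr rfl (fun i _ => by rw [hQ i e]; ring)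
  have h3 : Pi.single e (1:ℝ) ⬝ᵥ Q.mulVec (Pi.single e 1) = 0 := by
    rw [single_dotProduct, one_mul]
    show Q e ⬝ᵥ Pi.single e 1 = 0
    rw [dotProduct_single, mul_one, hdiag]
  rw [h1, h2, h3]; ring

lemma quad_single (hdiag : ∀ e, Q e e = 0) (e : Fin m) :
    chi [e] ⬝ᵥ Q.mulVec (chi [e]) = 0 := by
  have : chi [e] = Pi.single e 1 := by
    funext f; by_cases hf : f = e <;> simp [chi, hf, Pi.single_apply]
  rw [this, single_dotProduct, one_mul]
  show Q e ⬝ᵥ Pi.single e 1 = 0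
  rw [dotProduct_single, mul_one, hdiag]


lemma Tdot (htopo : ∀ e, src e < tgt e) {s u : Fin n}
    (e : Fin m) (c : Fin m → ℝ) {L : List (Fin m)}
    (hL : IsPathFrom src tgt s u L) (hne : L ≠ []) :
    Tmap src s Q e c ⬝ᵥ chi L = c ⬝ᵥ chi L - 2 * (Q e ⬝ᵥ chi L) + c e := by
  obtain ⟨a, L', rfl⟩ := List.exists_cons_of_ne_nil hne
  have hnd := path_nodup htopo hL
  obtain ⟨ha, hL'⟩ := hL
  rw [dot_chi _ hnd, dot_chi _ hnd, dot_chi _ hnd]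
  simp only [List.map_cons, List.sum_cons]
  have hTa : Tmap src s Q e c a = c a - 2 * Q e a + c e := by simp [Tmap, ha]
  have hmapT : L'.map (Tmap src s Q e c) = L'.map (fun f => c f - 2 * Q e f) := by
    apply List.map_congr_left
    intro f hf
    have h1 : tgt a ≤ src f := mem_src_ge htopo hL' f hf
    have h2 : src f ≠ s := by
      intro hfs
      exact absurd (lt_of_lt_of_le (ha ▸ htopo a) (hfs ▸ h1)) (lt_irrefl s)
    simp [Tmap, h2]
  rw [hTa, hmapT, sum_map_lin]
  ring

lemma lin_transfer (htopo : ∀ e, src e < tgt e) (hsym : Qᵀ = Q) (hdiag : ∀ e, Q e e = 0)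
    {s : Fin n} {cvec : Fin m → ℝ} {e : Fin m}
    (hlin : ∀ L, IsPathFrom src tgt s (tgt e) L →
      chi L ⬝ᵥ Q.mulVec (chi L) = cvec ⬝ᵥ chi L) :
    ∀ L', IsPathFrom src tgt s (src e) L' →
      chi L' ⬝ᵥ Q.mulVec (chi L') = Tmap src s Q e cvec ⬝ᵥ chi L' := by
  intro L' hL'
  by_cases hne : L' = []
  · subst hne; rw [chi_nil]; simp
  · have heL : e ∉ L' := fun he =>
      absurd (lt_of_le_of_lt (mem_tgt_le htopo hL' e he) (htopo e)) (lt_irrefl _)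
    have hpath : IsPathFrom src tgt s (tgt e) (L' ++ [e]) :=
      path_append hL' ⟨rfl, rfl⟩
    have hq := hlin _ hpath
    rw [quad_append hsym hdiag heL] at hq
    have hnd := path_nodup htopo hL'
    have hnd2 : (L' ++ [e]).Nodup := path_nodup htopo hpath
    have hdot : cvec ⬝ᵥ chi (L' ++ [e]) = cvec ⬝ᵥ chi L' + cvec e := by
      rw [dot_chi _ hnd2, dot_chi _ hnd]; simp
    rw [hdot] at hq
    rw [Tdot htopo e cvec hL' hne]
    linarith


end Stmt14Aux

open Stmt14Aux in
/-- For each vertex `v`, let `p v` be the pseudo-linearization vector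
of `Q_v` on `G_v` (a reduced-form cost vector supported on `A_v` whose linear cost on
every chosen critical path of `G_v` equals that path's quadratic cost), and let `R u`
map a cost vector on `G_u` to its unique equivalent reduced form (supported on `A_u`,
vanishing on the non-basic arcs of `G_u`, and giving every `s`-`u` path the same cost).
Then `p t` is a linearization vector of `Q_t` if and only if
`(R_u ∘ T_e)(p_v) = p_u` for every arc `e = (u,v) ∈ A`. -/
theorem stmt14 {n m : ℕ} (src tgt : Fin m → Fin n) (s t : Fin n)
    (htopo : ∀ e, src e < tgt e)
    (hcover : ∀ v : Fin n, ∃ L₁ L₂,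
      IsPathFrom src tgt s v L₁ ∧ IsPathFrom src tgt v t L₂)
    (Q : Matrix (Fin m) (Fin m) ℝ) (hsym : Qᵀ = Q) (hdiag : ∀ e, Q e e = 0)
    -- the chosen critical paths in each subgraph `G_v`
    (P : Fin n → Fin m → List (Fin m))
    (hP : ∀ v, ∀ e ∈ ArcsTo src tgt s v, ¬ IsNonbasicIn src tgt s v e →
      IsCriticalPathIn src tgt s v e (P v e))
    -- the pseudo-linearization vectors `p v` of `Q_v`
    (p : Fin n → Fin m → ℝ)
    (hpsupp : ∀ v e, e ∉ ArcsTo src tgt s v → p v e = 0)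
    (hpred : ∀ v e, IsNonbasicIn src tgt s v e → p v e = 0)
    (hpcrit : ∀ v, ∀ e ∈ ArcsTo src tgt s v, ¬ IsNonbasicIn src tgt s v e →
      p v ⬝ᵥ chi (P v e) = chi (P v e) ⬝ᵥ Q.mulVec (chi (P v e)))
    -- the reduced-form maps `R u`
    (R : Fin n → (Fin m → ℝ) → (Fin m → ℝ))
    (hRsupp : ∀ u c, ∀ e ∉ ArcsTo src tgt s u, R u c e = 0)
    (hRred : ∀ u c e, IsNonbasicIn src tgt s u e → R u c e = 0)
    (hRequiv : ∀ u c, ∀ L, IsPathFrom src tgt s u L →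
      R u c ⬝ᵥ chi L = c ⬝ᵥ chi L) :
    (∀ L, IsPathFrom src tgt s t L →
        chi L ⬝ᵥ Q.mulVec (chi L) = p t ⬝ᵥ chi L) ↔
    (∀ e : Fin m, R (src e) (Tmap src s Q e (p (tgt e))) = p (src e)) := by
    classical
  -- uniqueness of reduced linearization vectors on `G_u`
  have huniq : ∀ (u : Fin n) (c : Fin m → ℝ),
      (∀ e, e ∉ ArcsTo src tgt s u → c e = 0) →
      (∀ e, IsNonbasicIn src tgt s u e → c e = 0) →
      (∀ L, IsPathFrom src tgt s u L →
        chi L ⬝ᵥ Q.mulVec (chi L) = c ⬝ᵥ chi L) →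
      c = p u := by
    intro u c hc0 hcnb hclin
    funext f
    suffices h : ∀ (N : ℕ) (f : Fin m), (tgt f : ℕ) ≤ N → c f = p u f from
      h (tgt f) f le_rfl
    intro N
    induction N with
    | zero =>
        intro f hf
        have h1 : (src f : ℕ) < (tgt f : ℕ) := htopo f
        omega
    | succ N ih =>
        intro f hf
        by_cases hA : f ∈ ArcsTo src tgt s u
        · by_cases hnb : IsNonbasicIn src tgt s u f
          · rw [hcnb f hnb, hpred u f hnb]
          · obtain ⟨L₁, L₂, hPE, h₁, h₂, hnba⟩ := hP u f hA hnb
            have hpathC : IsPathFrom src tgt s u (P u f) := by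
              rw [hPE]; exact path_append h₁ ⟨rfl, h₂⟩
            have hndC := path_nodup htopo hpathC
            have key : c ⬝ᵥ chi (P u f) = p u ⬝ᵥ chi (P u f) :=
              (hclin _ hpathC).symm.trans (hpcrit u f hA hnb).symm
            rw [dot_chi _ hndC, dot_chi _ hndC, hPE] at key
            simp only [List.map_append, List.sum_append, List.map_cons,
              List.sum_cons] at key
            have hs2c : (L₂.map c).sum = 0 := by
              apply List.sum_eq_zero
              intro x hx
              obtain ⟨g, hg, rfl⟩ := List.mem_map.mp hx
              exact hcnb g (hnba g hg)
            have hs2p : (L₂.map (p u)).sum = 0 := by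
              apply List.sum_eq_zero
              intro x hx
              obtain ⟨g, hg, rfl⟩ := List.mem_map.mp hx
              exact hpred u g (hnba g hg)
            have hL1 : (L₁.map c).sum = (L₁.map (p u)).sum := by
              refine congrArg List.sum (List.map_congr_left ?_)
              intro g hg
              apply ih g
              have h1 : (tgt g : ℕ) ≤ (src f : ℕ) := mem_tgt_le htopo h₁ g hg
              have h2 : (src f : ℕ) < (tgt f : ℕ) := htopo f
              omega
            rw [hL1, hs2c, hs2p] at key
            linarith
        · rw [hc0 f hA, hpsupp u f hA]
  -- the pseudo-linearization vanishes on arcs leaving `s`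
  have hps0 : ∀ e : Fin m, src e = s → p (tgt e) e = 0 := by
    intro e hes
    have hpathe : IsPathFrom src tgt s (tgt e) [e] := ⟨hes, rfl⟩
    have hA : e ∈ ArcsTo src tgt s (tgt e) := ⟨[e], hpathe, List.mem_singleton_self e⟩
    have hnb : ¬ IsNonbasicIn src tgt s (tgt e) e := fun h => h.2.1 hes
    obtain ⟨L₁, L₂, hPE, h₁, h₂, _⟩ := hP (tgt e) e hA hnb
    have hL₁ : L₁ = [] := path_nil htopo (by rw [hes] at h₁; exact h₁)
    have hL₂ : L₂ = [] := path_nil htopo h₂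
    have hpe := hpcrit (tgt e) e hA hnb
    rw [hPE, hL₁, hL₂] at hpe
    simp only [List.nil_append] at hpe
    rw [quad_single hdiag, dot_chi _ (List.nodup_singleton e)] at hpe
    simpa using hpe
  constructor
  · -- forward direction
    intro hlin e
    have hdown : ∀ (M : List (Fin m)) (v : Fin n), IsPathFrom src tgt v t M →
        ∀ L, IsPathFrom src tgt s v L →
          chi L ⬝ᵥ Q.mulVec (chi L) = p v ⬝ᵥ chi L := by
      intro M
      induction M with
      | nil =>
          intro v hv
          have hvt : v = t := hv
          subst hvt
          exact hlin
      | cons f M ih =>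
          intro v hv
          obtain ⟨hfv, hM⟩ := hv
          have hwlin := ih (tgt f) hM
          have hTlin := lin_transfer htopo hsym hdiag (e := f) hwlin
          have hclin : ∀ L, IsPathFrom src tgt s (src f) L →
              chi L ⬝ᵥ Q.mulVec (chi L) =
                R (src f) (Tmap src s Q f (p (tgt f))) ⬝ᵥ chi L :=
            fun L hL => (hTlin L hL).trans (hRequiv (src f) _ L hL).symm
          have heq := huniq (src f) _ (hRsupp (src f) _) (hRred (src f) _) hclin
          subst hfv
          intro L hL
          rw [← heq]
          exact hclin L hL
    obtain ⟨_, M, _, hM⟩ := hcover (tgt e)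
    have hvlin := hdown M (tgt e) hM
    have hTlin := lin_transfer htopo hsym hdiag (e := e) hvlin
    have hclin : ∀ L, IsPathFrom src tgt s (src e) L →
        chi L ⬝ᵥ Q.mulVec (chi L) =
          R (src e) (Tmap src s Q e (p (tgt e))) ⬝ᵥ chi L :=
      fun L hL => (hTlin L hL).trans (hRequiv (src e) _ L hL).symm
    exact huniq (src e) _ (hRsupp (src e) _) (hRred (src e) _) hclin
  · -- backward direction
    intro hR
    have main : ∀ (L : List (Fin m)) (v : Fin n), IsPathFrom src tgt s v L →
        chi L ⬝ᵥ Q.mulVec (chi L) = p v ⬝ᵥ chi L := by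
      intro L
      induction L using List.reverseRecOn with
      | nil => intro v hv; rw [chi_nil]; simp
      | append_singleton L' e ih =>
          intro v hv
          obtain ⟨u', hL', he⟩ := path_append_split hv
          obtain ⟨heu, hev⟩ := he
          have hev' : tgt e = v := hev
          subst hev'
          subst heu
          by_cases hne : L' = []
          · subst hne
            have hs : s = src e := hL'
            have hq : chi [e] ⬝ᵥ Q.mulVec (chi [e]) = 0 := quad_single hdiag e
            have hp0 : p (tgt e) e = 0 := hps0 e hs.symm
            simp only [List.nil_append]
            rw [hq, dot_chi _ (List.nodup_singleton e)]
            simp [hp0]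
          · have heL : e ∉ L' := fun hmem =>
              absurd (lt_of_le_of_lt (mem_tgt_le htopo hL' e hmem) (htopo e))
                (lt_irrefl _)
            have hIH := ih (src e) hL'
            have hRe := hR e
            have h1 : p (src e) ⬝ᵥ chi L' = Tmap src s Q e (p (tgt e)) ⬝ᵥ chi L' := by
              rw [← hRe]; exact hRequiv (src e) _ L' hL'
            have h2 := Tdot (Q := Q) htopo e (p (tgt e)) hL' hne
            have hqa := quad_append (e := e) (L := L') hsym hdiag heL
            have hnd2 : (L' ++ [e]).Nodup := path_nodup htopo hv
            have hnd1 := path_nodup htopo hL'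
            have hdot : p (tgt e) ⬝ᵥ chi (L' ++ [e]) =
                p (tgt e) ⬝ᵥ chi L' + p (tgt e) e := by
              rw [dot_chi _ hnd2, dot_chi _ hnd1]; simp
            rw [hqa, hdot]
            linarith
    exact fun L hL => main L t hL
end
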